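/- arXiv:2211.06693 — 4 statements merged into one kernel-verified Lean document; each statement's English description precedes it below -/
import Mathlib

section
/- Let d ≥ 1, M ≥ 1 be integers, p ∈ [1,∞] and k ≥ 0. There exists a constant C, depending only on p, k, M and d, such that for all families g = (g_1,…,g_M) and f = (f_1,…,f_M) of nonnegative measurable functions on ℝ^d with ‖g‖_{p,M,k+1} < ∞ and ‖f‖_{1,M,k+1} < ∞, one has ‖Q_m(g,f)‖_{p,k} ≤ C·‖g‖_{p,M,k+1}·‖f‖_{1,M,k+1} for every m = 1,…,M, and consequently ∑_{m=1}^M ‖Q_m(g,f)‖_{p,k} ≤ M·C·‖g‖_{p,M,k+1}·‖f‖_{1,M,k+1}. -/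
/-!
Split `Q_m` into its gain and loss parts. In the `n`-th gain term, `v` is the convex combination
`(n/m) v' + (1 - n/m) w` of `v' = cvar d m n v w` and `w`, so
`‖v - w‖ ⟨v⟩^k ≤ ⟨v'⟩^(k+1) ⟨w⟩^(k+1)`; the loss term is the case `v' = v`. Every term is thereby
dominated by an integral `∫ ψ(a v - b w) χ(w) dw` with `|a| ≥ 1`, whose `L^p` norm in `v` is at
most `‖χ‖₁ ‖ψ‖_p`: Hölder's inequality against the weight `χ`, Tonelli, and the fact that
`v ↦ a v` does not increase `L^p` norms when `|a| ≥ 1`.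
-/

open MeasureTheory Real Filter
open scoped ENNReal NNReal

noncomputable section

/-- Euclidean space ℝ^d. -/
abbrev Euc (d : ℕ) := EuclideanSpace ℝ (Fin d)

/-- The Japanese bracket ⟨v⟩ = √(1+|v|²). -/
def jap {d : ℕ} (v : Euc d) : ℝ := Real.sqrt (1 + ‖v‖ ^ 2)

/-- The change of variables w' = (m·v − (m−n)·w)/n. -/
def cvar (d : ℕ) (m n : ℕ) (v w : Euc d) : Euc d :=
  ((n : ℝ))⁻¹ • ((m : ℝ) • v - ((m : ℝ) - (n : ℝ)) • w)

/-- The coagulation operator Q_m(g,f). -/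
def Qcoag (d M : ℕ) (g f : ℕ → Euc d → ℝ) (m : ℕ) (v : Euc d) : ℝ :=
  (∑ n ∈ Finset.Ico 1 m, ((m : ℝ) / (n : ℝ)) ^ 2 *
      ∫ w, g n (cvar d m n v w) * f (m - n) w * ‖v - w‖)
  - 2 * ∑ n ∈ Finset.Icc 1 M, g m v * ∫ w, f n w * ‖v - w‖

/-- The weighted L^p norm ‖h‖_{p,k} = ‖h ⟨·⟩^k‖_{L^p}. -/
def wnorm (d : ℕ) (p : ℝ≥0∞) (k : ℕ) (h : Euc d → ℝ) : ℝ≥0∞ :=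
  eLpNorm (fun v => h v * jap v ^ k) p volume

/-- Partial derivative in direction i. -/
def pd (d : ℕ) (i : Fin d) (h : Euc d → ℝ) (v : Euc d) : ℝ :=
  fderiv ℝ h v (EuclideanSpace.single i 1)

/-- Laplacian. -/
def lap (d : ℕ) (h : Euc d → ℝ) (v : Euc d) : ℝ :=
  ∑ i : Fin d, pd d i (fun w => pd d i h w) v

/-- div_v (v · h(v)). -/
def divVF (d : ℕ) (h : Euc d → ℝ) (v : Euc d) : ℝ :=
  ∑ i : Fin d, pd d i (fun w => w i * h w) v

/-- v · ∇φ(v). -/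
def vGrad (d : ℕ) (h : Euc d → ℝ) (v : Euc d) : ℝ :=
  ∑ i : Fin d, v i * pd d i h v

/-- A (nonnegative) classical solution of the spatially homogeneous coagulation
system ∂_t f_m = Δ f_m + div(v f_m) + Q_m(f,f) on [0,T]. -/
structure IsClassicalSolution (d M : ℕ) (T : ℝ) (f : ℕ → ℝ → Euc d → ℝ) : Prop where
  schwartz : ∀ m ∈ Finset.Icc 1 M, ∀ t ∈ Set.Icc (0 : ℝ) T,
    ∃ φ : SchwartzMap (Euc d) ℝ, ∀ v, f m t v = φ v
  cont : ∀ m ∈ Finset.Icc 1 M, ∀ n : ℕ,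
    ContinuousOn (fun p : ℝ × Euc d => iteratedFDeriv ℝ n (fun w => f m p.1 w) p.2)
      (Set.Icc 0 T ×ˢ Set.univ)
  pde : ∀ m ∈ Finset.Icc 1 M, ∀ t ∈ Set.Icc (0 : ℝ) T, ∀ v : Euc d,
    HasDerivWithinAt (fun s => f m s v)
      (lap d (fun w => f m t w) v + divVF d (fun w => f m t w) v +
        Qcoag d M (fun n => f n t) (fun n => f n t) m v)
      (Set.Icc 0 T) t


section

variable {α : Type*} [MeasurableSpace α] {μ : Measure α}

lemma lintegral_mul_rpow_le {F χ : α → ℝ≥0∞} (hF : AEMeasurable F μ) (hχ : AEMeasurable χ μ)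
    {q : ℝ} (hq : 1 ≤ q) :
    (∫⁻ x, F x * χ x ∂μ) ^ q ≤ (∫⁻ x, χ x ∂μ) ^ (q - 1) * ∫⁻ x, F x ^ q * χ x ∂μ := by
  rcases hq.eq_or_lt with rfl | hq
  · simp
  set r := q.conjExponent
  have hqr : q.HolderConjugate r := .conjExponent hq
  have hq0 : 0 < q := hqr.pos
  have hHolder := ENNReal.lintegral_mul_le_Lp_mul_Lq μ hqr
    (hF.mul (hχ.pow_const (1 / q))) (hχ.pow_const (1 / r))
  have hsplit : ∀ x, F x * χ x ^ (1 / q) * χ x ^ (1 / r) = F x * χ x := fun x => by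
    rw [mul_assoc, ← ENNReal.rpow_add_of_nonneg _ _ hqr.one_div_nonneg hqr.symm.one_div_nonneg,
      hqr.one_div_add_one_div, div_one, ENNReal.rpow_one]
  have hpowq : ∀ x, (F x * χ x ^ (1 / q)) ^ q = F x ^ q * χ x := fun x => by
    rw [ENNReal.mul_rpow_of_nonneg _ _ hq0.le, ← ENNReal.rpow_mul, one_div_mul_cancel hq0.ne',
      ENNReal.rpow_one]
  have hpowr : ∀ x, (χ x ^ (1 / r)) ^ r = χ x := fun x => by
    rw [← ENNReal.rpow_mul, one_div_mul_cancel hqr.symm.ne_zero, ENNReal.rpow_one]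
  simp only [Pi.mul_apply, hsplit, hpowq, hpowr] at hHolder
  calc (∫⁻ x, F x * χ x ∂μ) ^ q
      ≤ ((∫⁻ x, F x ^ q * χ x ∂μ) ^ (1 / q) * (∫⁻ x, χ x ∂μ) ^ (1 / r)) ^ q := by gcongr
    _ = (∫⁻ x, χ x ∂μ) ^ (q - 1) * ∫⁻ x, F x ^ q * χ x ∂μ := by
      rw [ENNReal.mul_rpow_of_nonneg _ _ hq0.le, ← ENNReal.rpow_mul, ← ENNReal.rpow_mul,
        one_div_mul_cancel hq0.ne', ENNReal.rpow_one, mul_comm, one_div_mul_eq_div,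
        hqr.div_conj_eq_sub_one]

lemma eLpNorm_const_mul_le {c : ℝ≥0∞} (hc : c ≠ ∞) (F : α → ℝ≥0∞) (p : ℝ≥0∞) :
    eLpNorm (fun x => c * F x) p μ ≤ c * eLpNorm F p μ := by
  lift c to ℝ≥0 using hc
  exact eLpNorm_le_nnreal_smul_eLpNorm_of_ae_le_mul' (Eventually.of_forall fun _ => le_rfl) p

end

section

variable {E : Type*} [NormedAddCommGroup E] [NormedSpace ℝ E] [MeasurableSpace E] [BorelSpace E]
  [FiniteDimensional ℝ E] (μ : Measure E) [μ.IsAddHaarMeasure]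

lemma lintegral_comp_smul_add_le {h : E → ℝ≥0∞} (hh : Measurable h) {a : ℝ} (ha : 1 ≤ |a|)
    (c : E) : ∫⁻ x, h (a • x + c) ∂μ ≤ ∫⁻ x, h x ∂μ := by
  have ha0 : a ≠ 0 := abs_pos.1 (zero_lt_one.trans_le ha)
  calc ∫⁻ x, h (a • x + c) ∂μ = ∫⁻ y, h (y + c) ∂(μ.map (a • ·)) :=
        (lintegral_map (hh.comp (measurable_add_const c)) (measurable_const_smul a)).symm
    _ = ENNReal.ofReal |(a ^ Module.finrank ℝ E)⁻¹| * ∫⁻ x, h x ∂μ := by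
        rw [Measure.map_addHaar_smul μ ha0, lintegral_smul_measure,
          lintegral_add_right_eq_self h c, smul_eq_mul]
    _ ≤ ∫⁻ x, h x ∂μ := by
        refine mul_le_of_le_one_left zero_le (ENNReal.ofReal_le_one.2 ?_)
        rw [abs_inv, abs_pow]
        exact inv_le_one_of_one_le₀ (one_le_pow₀ ha)

lemma lintegral_comp_mul_le_essSup_mul {ψ χ : E → ℝ≥0∞} (hχ : Measurable χ) (a : ℝ) {b : ℝ}
    (hb : b ≠ 0) (v : E) :
    ∫⁻ w, ψ (a • v - b • w) * χ w ∂μ ≤ essSup ψ μ * ∫⁻ w, χ w ∂μ := by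
  have hT : Measure.QuasiMeasurePreserving (fun w : E => a • v - b • w) μ μ := by
    simp_rw [sub_eq_add_neg, ← neg_smul]
    exact (measurePreserving_add_left μ (a • v)).quasiMeasurePreserving.comp
      (Measure.quasiMeasurePreserving_smul μ (neg_ne_zero.2 hb))
  rw [← lintegral_const_mul _ hχ]
  exact lintegral_mono_ae ((hT.ae (ENNReal.ae_le_essSup ψ)).mono fun w hw => by gcongr)

lemma lintegral_rpow_lintegral_comp_mul_le {ψ χ : E → ℝ≥0∞} (hψ : Measurable ψ)
    (hχ : Measurable χ) {a : ℝ} (ha : 1 ≤ |a|) (b : ℝ) {q : ℝ} (hq : 1 ≤ q) :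
    ∫⁻ v, (∫⁻ w, ψ (a • v - b • w) * χ w ∂μ) ^ q ∂μ ≤
      (∫⁻ w, χ w ∂μ) ^ q * ∫⁻ x, ψ x ^ q ∂μ := by
  set I := ∫⁻ w, χ w ∂μ
  have hT : Measurable fun z : E × E => a • z.1 - b • z.2 := by fun_prop
  have hψq : Measurable fun z : E × E => ψ (a • z.1 - b • z.2) ^ q := (hψ.comp hT).pow_const q
  have hF : Measurable fun z : E × E => ψ (a • z.1 - b • z.2) ^ q * χ z.2 :=
    hψq.mul (hχ.comp measurable_snd)
  calc ∫⁻ v, (∫⁻ w, ψ (a • v - b • w) * χ w ∂μ) ^ q ∂μ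
      ≤ ∫⁻ v, I ^ (q - 1) * ∫⁻ w, ψ (a • v - b • w) ^ q * χ w ∂μ ∂μ :=
        lintegral_mono fun v => lintegral_mul_rpow_le (by fun_prop) hχ.aemeasurable hq
    _ = I ^ (q - 1) * ∫⁻ v, ∫⁻ w, ψ (a • v - b • w) ^ q * χ w ∂μ ∂μ :=
        lintegral_const_mul _ hF.lintegral_prod_right'
    _ = I ^ (q - 1) * ∫⁻ w, (∫⁻ v, ψ (a • v - b • w) ^ q ∂μ) * χ w ∂μ := by
        rw [lintegral_lintegral_swap hF.aemeasurable]
        congr 1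
        refine lintegral_congr fun w => lintegral_mul_const _ ?_
        fun_prop
    _ ≤ I ^ (q - 1) * ∫⁻ w, (∫⁻ x, ψ x ^ q ∂μ) * χ w ∂μ := by
        refine mul_le_mul_right (lintegral_mono fun w => mul_le_mul_left ?_ _) _
        simpa only [sub_eq_add_neg] using
          lintegral_comp_smul_add_le μ (hψ.pow_const q) ha (-(b • w))
    _ = I ^ (q - 1) * I ^ (1 : ℝ) * ∫⁻ x, ψ x ^ q ∂μ := by
        rw [lintegral_const_mul _ hχ, ENNReal.rpow_one]
        ring
    _ = I ^ q * ∫⁻ x, ψ x ^ q ∂μ := by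
        rw [← ENNReal.rpow_add_of_nonneg _ _ (by linarith) zero_le_one, sub_add_cancel]

lemma eLpNorm_lintegral_comp_mul_le {p : ℝ≥0∞} (hp : 1 ≤ p) {ψ χ : E → ℝ≥0∞}
    (hψ : Measurable ψ) (hχ : Measurable χ) {a b : ℝ} (ha : 1 ≤ |a|) (hb : b ≠ 0) :
    eLpNorm (fun v => ∫⁻ w, ψ (a • v - b • w) * χ w ∂μ) p μ ≤
      (∫⁻ w, χ w ∂μ) * eLpNorm ψ p μ := by
  rcases eq_or_ne p ∞ with rfl | hp_top
  · simp only [eLpNorm_exponent_top, eLpNormEssSup, enorm_eq_self]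
    refine essSup_le_of_ae_le _ (Eventually.of_forall fun v => ?_)
    rw [mul_comm]
    exact lintegral_comp_mul_le_essSup_mul μ hχ a hb v
  have hq : 1 ≤ p.toReal := by simpa using ENNReal.toReal_mono hp_top hp
  have hq0 : 0 < p.toReal := zero_lt_one.trans_le hq
  simp only [eLpNorm_eq_lintegral_rpow_enorm_toReal (zero_lt_one.trans_le hp).ne' hp_top,
    enorm_eq_self]
  calc _ ≤ ((∫⁻ w, χ w ∂μ) ^ p.toReal * ∫⁻ x, ψ x ^ p.toReal ∂μ) ^ (1 / p.toReal) := by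
        gcongr
        exact lintegral_rpow_lintegral_comp_mul_le μ hψ hχ ha b hq
    _ = _ := by
        rw [ENNReal.mul_rpow_of_nonneg _ _ (by positivity), ← ENNReal.rpow_mul,
          mul_one_div_cancel hq0.ne', ENNReal.rpow_one]

end

section

variable {d M : ℕ}

lemma one_le_jap (v : Euc d) : 1 ≤ jap v :=
  Real.one_le_sqrt.2 (le_add_of_nonneg_right (sq_nonneg _))

lemma norm_jap (v : Euc d) : ‖jap v‖ = jap v :=
  Real.norm_of_nonneg (zero_le_one.trans (one_le_jap v))

lemma jap_le_jap {u v : Euc d} (h : ‖v‖ ≤ ‖u‖) : jap v ≤ jap u := by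
  unfold jap; gcongr

lemma measurable_jap : Measurable (jap (d := d)) := by
  unfold jap; fun_prop

lemma norm_add_norm_le_jap_mul_jap (u w : Euc d) : ‖u‖ + ‖w‖ ≤ jap u * jap w := by
  rw [jap, jap, ← Real.sqrt_mul (by positivity)]
  refine Real.le_sqrt_of_sq_le ?_
  nlinarith [sq_nonneg (‖u‖ * ‖w‖ - 1), norm_nonneg u, norm_nonneg w]

lemma jap_le_jap_mul_jap_of_mem_segment {u v w : Euc d} (hv : v ∈ segment ℝ u w) :
    jap v ≤ jap u * jap w := by
  have hnorm : ‖v‖ ≤ max ‖u‖ ‖w‖ :=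
    (convexOn_univ_norm).le_max_of_mem_segment (Set.mem_univ _) (Set.mem_univ _) hv
  rcases le_max_iff.1 hnorm with h | h
  · exact (jap_le_jap h).trans (le_mul_of_one_le_right (by linarith [one_le_jap u]) (one_le_jap w))
  · exact (jap_le_jap h).trans (le_mul_of_one_le_left (by linarith [one_le_jap w]) (one_le_jap u))

lemma norm_sub_mul_jap_pow_le_of_mem_segment {u v w : Euc d} (hv : v ∈ segment ℝ u w) (k : ℕ) :
    ‖v - w‖ * jap v ^ k ≤ jap u ^ (k + 1) * jap w ^ (k + 1) := by
  have hdist : ‖v - w‖ ≤ jap u * jap w :=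
    calc ‖v - w‖ ≤ ‖u - w‖ := norm_sub_le_of_mem_segment (segment_symm ℝ u w ▸ hv)
      _ ≤ ‖u‖ + ‖w‖ := norm_sub_le u w
      _ ≤ jap u * jap w := norm_add_norm_le_jap_mul_jap u w
  have hv0 : 0 ≤ jap v := zero_le_one.trans (one_le_jap v)
  calc ‖v - w‖ * jap v ^ k ≤ (jap u * jap w) * (jap u * jap w) ^ k :=
        mul_le_mul hdist (pow_le_pow_left₀ hv0 (jap_le_jap_mul_jap_of_mem_segment hv) k)
          (pow_nonneg hv0 k) ((norm_nonneg _).trans hdist)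
    _ = jap u ^ (k + 1) * jap w ^ (k + 1) := by ring

lemma mem_segment_cvar {m n : ℕ} (hn : 1 ≤ n) (hnm : n ≤ m) (v w : Euc d) :
    v ∈ segment ℝ (cvar d m n v w) w := by
  have hn0 : (0 : ℝ) < n := by exact_mod_cast hn
  have hm0 : (0 : ℝ) < m := by exact_mod_cast hn.trans hnm
  have hnm' : (n : ℝ) ≤ m := by exact_mod_cast hnm
  refine ⟨n / m, (m - n) / m, by positivity, div_nonneg (by linarith) hm0.le,
    by field_simp; ring, ?_⟩
  simp only [cvar, smul_smul, smul_sub]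
  match_scalars <;> field_simp
  ring

def weightedENorm (k : ℕ) (h : Euc d → ℝ) (v : Euc d) : ℝ≥0∞ := ‖h v * jap v ^ k‖ₑ

lemma enorm_integral_mul_jap_pow_le {v : Euc d} {T : Euc d → Euc d}
    (hT : ∀ w, v ∈ segment ℝ (T w) w) (g f : Euc d → ℝ) (k : ℕ) :
    ‖(∫ w, g (T w) * f w * ‖v - w‖) * jap v ^ k‖ₑ ≤
      ∫⁻ w, weightedENorm (k + 1) g (T w) * weightedENorm (k + 1) f w := by
  rw [← integral_mul_const]
  refine (enorm_integral_le_lintegral_enorm _).trans (lintegral_mono fun w => ?_)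
  rw [weightedENorm, weightedENorm, ← enorm_mul, enorm_le_iff_norm_le]
  simp only [norm_mul, norm_pow, norm_norm, norm_jap]
  calc _ = ‖g (T w)‖ * ‖f w‖ * (‖v - w‖ * jap v ^ k) := by ring
    _ ≤ ‖g (T w)‖ * ‖f w‖ * (jap (T w) ^ (k + 1) * jap w ^ (k + 1)) :=
      mul_le_mul_of_nonneg_left (norm_sub_mul_jap_pow_le_of_mem_segment (hT w) k) (by positivity)
    _ = _ := by ring

/-- The `n`-th gain term of `Q_m`, with `ψ` and `χ` in place of the weighted `g_n` and `f_{m-n}`. -/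
def gainIntegral (ψ χ : Euc d → ℝ≥0∞) (m n : ℕ) (v : Euc d) : ℝ≥0∞ :=
  ∫⁻ w, ψ (cvar d m n v w) * χ w

lemma measurable_gainIntegral {ψ χ : Euc d → ℝ≥0∞} (hψ : Measurable ψ) (hχ : Measurable χ)
    (m n : ℕ) : Measurable (gainIntegral ψ χ m n) := by
  have hcvar : Measurable fun z : Euc d × Euc d => cvar d m n z.1 z.2 := by
    unfold cvar; fun_prop
  exact ((hψ.comp hcvar).mul (hχ.comp measurable_snd)).lintegral_prod_right'

lemma eLpNorm_gainIntegral_le {p : ℝ≥0∞} (hp : 1 ≤ p) {ψ χ : Euc d → ℝ≥0∞}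
    (hψ : Measurable ψ) (hχ : Measurable χ) {m n : ℕ} (hn : 1 ≤ n) (hnm : n < m) :
    eLpNorm (gainIntegral ψ χ m n) p volume ≤ (∫⁻ w, χ w) * eLpNorm ψ p volume := by
  have hn0 : (0 : ℝ) < n := by exact_mod_cast hn
  have hnm' : (n : ℝ) < m := by exact_mod_cast hnm
  have hcvar : ∀ v w, cvar d m n v w = ((m : ℝ) / n) • v - (((m : ℝ) - n) / n) • w := by
    intro v w
    simp only [cvar, smul_sub, smul_smul, inv_mul_eq_div]
  unfold gainIntegral
  simp_rw [hcvar]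
  refine eLpNorm_lintegral_comp_mul_le volume hp hψ hχ ?_ (div_ne_zero (by linarith) hn0.ne')
  rw [abs_of_pos (div_pos (by linarith) hn0), one_le_div hn0]
  exact hnm'.le

lemma measurable_weightedENorm (k : ℕ) {h : Euc d → ℝ} (hh : Measurable h) :
    Measurable (weightedENorm k h) :=
  (hh.mul (measurable_jap.pow_const k)).enorm

lemma eLpNorm_weightedENorm (p : ℝ≥0∞) (k : ℕ) (h : Euc d → ℝ) :
    eLpNorm (weightedENorm k h) p volume = wnorm d p k h :=
  eLpNorm_enorm _

lemma lintegral_weightedENorm (k : ℕ) (h : Euc d → ℝ) :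
    ∫⁻ v, weightedENorm k h v = wnorm d 1 k h :=
  (eLpNorm_one_eq_lintegral_enorm).symm

lemma enorm_Qcoag_mul_jap_pow_le (g f : ℕ → Euc d → ℝ) (m k : ℕ) (v : Euc d) :
    ‖Qcoag d M g f m v * jap v ^ k‖ₑ ≤
      (∑ n ∈ Finset.Ico 1 m, ‖((m : ℝ) / n) ^ 2‖ₑ *
          gainIntegral (weightedENorm (k + 1) (g n)) (weightedENorm (k + 1) (f (m - n))) m n v) +
        2 * ∑ n ∈ Finset.Icc 1 M,
          weightedENorm (k + 1) (g m) v * ∫⁻ w, weightedENorm (k + 1) (f n) w := by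
  rw [Qcoag, sub_mul]
  refine enorm_sub_le.trans (add_le_add ?_ ?_)
  · rw [Finset.sum_mul]
    refine (enorm_sum_le _ _).trans (Finset.sum_le_sum fun n hn => ?_)
    obtain ⟨hn, hnm⟩ := Finset.mem_Ico.1 hn
    rw [mul_assoc, enorm_mul]
    exact mul_le_mul_right
      (enorm_integral_mul_jap_pow_le (fun w => mem_segment_cvar hn hnm.le v w) _ _ k) _
  · rw [mul_assoc, enorm_mul, Finset.sum_mul, Real.enorm_of_nonneg zero_le_two,
      ENNReal.ofReal_ofNat]
    refine mul_le_mul_right ?_ _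
    refine (enorm_sum_le _ _).trans (Finset.sum_le_sum fun n _ => ?_)
    rw [← integral_const_mul,
      ← lintegral_const_mul' (weightedENorm (k + 1) (g m) v) _ enorm_ne_top]
    simpa only [mul_assoc] using
      enorm_integral_mul_jap_pow_le (fun w => left_mem_segment ℝ v w) (g m) (f n) k

lemma mem_Icc_and_sub_mem_Icc {m n : ℕ} (hm : m ≤ M) (hn : n ∈ Finset.Ico 1 m) :
    n ∈ Finset.Icc 1 M ∧ m - n ∈ Finset.Icc 1 M := by
  simp only [Finset.mem_Ico, Finset.mem_Icc] at hn ⊢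
  omega

lemma eLpNorm_gain_le {p : ℝ≥0∞} (hp : 1 ≤ p) {G F : ℕ → Euc d → ℝ≥0∞}
    (hG : ∀ n ∈ Finset.Icc 1 M, Measurable (G n)) (hF : ∀ n ∈ Finset.Icc 1 M, Measurable (F n))
    {m : ℕ} (hm : m ≤ M) :
    eLpNorm (fun v => ∑ n ∈ Finset.Ico 1 m,
        ‖((m : ℝ) / n) ^ 2‖ₑ * gainIntegral (G n) (F (m - n)) m n v) p volume ≤
      (M : ℝ≥0∞) ^ 3 * (∑ n ∈ Finset.Icc 1 M, eLpNorm (G n) p volume) *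
        ∑ n ∈ Finset.Icc 1 M, ∫⁻ w, F n w := by
  have hmem n (hn : n ∈ Finset.Ico 1 m) := mem_Icc_and_sub_mem_Icc hm hn
  have hterm : ∀ n ∈ Finset.Ico 1 m,
      eLpNorm (fun v => ‖((m : ℝ) / n) ^ 2‖ₑ * gainIntegral (G n) (F (m - n)) m n v) p volume ≤
        (M : ℝ≥0∞) ^ 2 * ((∑ n ∈ Finset.Icc 1 M, eLpNorm (G n) p volume) *
          ∑ n ∈ Finset.Icc 1 M, ∫⁻ w, F n w) := by
    intro n hn
    obtain ⟨hn1, hnm⟩ := Finset.mem_Ico.1 hn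
    refine (eLpNorm_const_mul_le enorm_ne_top _ p).trans (mul_le_mul' ?_ ?_)
    · have hmn : (m : ℝ) / n ≤ M :=
        (div_le_self (Nat.cast_nonneg m) (by exact_mod_cast hn1)).trans (by exact_mod_cast hm)
      rw [enorm_pow, Real.enorm_of_nonneg (by positivity), ← ENNReal.ofReal_natCast]
      gcongr
    · refine (eLpNorm_gainIntegral_le hp (hG n (hmem n hn).1) (hF _ (hmem n hn).2) hn1
        hnm).trans ?_
      rw [mul_comm]
      exact mul_le_mul'
        (Finset.single_le_sum (f := fun i => eLpNorm (G i) p volume) (fun i _ => zero_le)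
          (hmem n hn).1)
        (Finset.single_le_sum (f := fun i => ∫⁻ w, F i w) (fun i _ => zero_le) (hmem n hn).2)
  calc _ = eLpNorm (∑ n ∈ Finset.Ico 1 m,
          fun v => ‖((m : ℝ) / n) ^ 2‖ₑ * gainIntegral (G n) (F (m - n)) m n v) p volume := by
        rw [Finset.sum_fn]
    _ ≤ ∑ n ∈ Finset.Ico 1 m, eLpNorm (fun v =>
        ‖((m : ℝ) / n) ^ 2‖ₑ * gainIntegral (G n) (F (m - n)) m n v) p volume := by
        refine eLpNorm_sum_le (fun n hn => ?_) hp
        exact ((measurable_gainIntegral (hG n (hmem n hn).1) (hF _ (hmem n hn).2) m n).const_mul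
          _).aestronglyMeasurable
    _ ≤ ∑ n ∈ Finset.Ico 1 m, (M : ℝ≥0∞) ^ 2 * ((∑ n ∈ Finset.Icc 1 M, eLpNorm (G n) p volume) *
          ∑ n ∈ Finset.Icc 1 M, ∫⁻ w, F n w) := Finset.sum_le_sum hterm
    _ ≤ (M : ℝ≥0∞) * ((M : ℝ≥0∞) ^ 2 * ((∑ n ∈ Finset.Icc 1 M, eLpNorm (G n) p volume) *
          ∑ n ∈ Finset.Icc 1 M, ∫⁻ w, F n w)) := by
        rw [Finset.sum_const, Nat.card_Ico, nsmul_eq_mul]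
        gcongr
        exact_mod_cast (by omega : m - 1 ≤ M)
    _ = _ := by ring

lemma eLpNorm_loss_le {p : ℝ≥0∞} {G F : ℕ → Euc d → ℝ≥0∞}
    (hF : ∑ n ∈ Finset.Icc 1 M, ∫⁻ w, F n w ≠ ∞) {m : ℕ} (hm : m ∈ Finset.Icc 1 M) :
    eLpNorm (fun v => 2 * ∑ n ∈ Finset.Icc 1 M, G m v * ∫⁻ w, F n w) p volume ≤
      2 * (∑ n ∈ Finset.Icc 1 M, eLpNorm (G n) p volume) * ∑ n ∈ Finset.Icc 1 M, ∫⁻ w, F n w := by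
  have hconst : (fun v => 2 * ∑ n ∈ Finset.Icc 1 M, G m v * ∫⁻ w, F n w) =
      fun v => (2 * ∑ n ∈ Finset.Icc 1 M, ∫⁻ w, F n w) * G m v := by
    funext v
    rw [← Finset.mul_sum]
    ring
  rw [hconst]
  calc _ ≤ (2 * ∑ n ∈ Finset.Icc 1 M, ∫⁻ w, F n w) * eLpNorm (G m) p volume :=
        eLpNorm_const_mul_le (ENNReal.mul_ne_top ENNReal.ofNat_ne_top hF) _ p
    _ ≤ (2 * ∑ n ∈ Finset.Icc 1 M, ∫⁻ w, F n w) * ∑ n ∈ Finset.Icc 1 M, eLpNorm (G n) p volume := by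
        gcongr
        exact Finset.single_le_sum (f := fun n => eLpNorm (G n) p volume) (fun _ _ => zero_le) hm
    _ = _ := by ring

lemma wnorm_Qcoag_le {p : ℝ≥0∞} (hp : 1 ≤ p) (k : ℕ) {g f : ℕ → Euc d → ℝ}
    (hg : ∀ n ∈ Finset.Icc 1 M, Measurable (g n)) (hf : ∀ n ∈ Finset.Icc 1 M, Measurable (f n))
    (hSf : ∑ n ∈ Finset.Icc 1 M, wnorm d 1 (k + 1) (f n) ≠ ∞) {m : ℕ} (hm : m ∈ Finset.Icc 1 M) :
    wnorm d p k (Qcoag d M g f m) ≤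
      ((M : ℝ≥0∞) ^ 3 + 2) * (∑ n ∈ Finset.Icc 1 M, wnorm d p (k + 1) (g n)) *
        ∑ n ∈ Finset.Icc 1 M, wnorm d 1 (k + 1) (f n) := by
  let G n := weightedENorm (k + 1) (g n)
  let F n := weightedENorm (k + 1) (f n)
  let gain v := ∑ n ∈ Finset.Ico 1 m, ‖((m : ℝ) / n) ^ 2‖ₑ * gainIntegral (G n) (F (m - n)) m n v
  let loss v := 2 * ∑ n ∈ Finset.Icc 1 M, G m v * ∫⁻ w, F n w
  have hG n (hn : n ∈ Finset.Icc 1 M) := measurable_weightedENorm (k + 1) (hg n hn)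
  have hF n (hn : n ∈ Finset.Icc 1 M) := measurable_weightedENorm (k + 1) (hf n hn)
  calc wnorm d p k (Qcoag d M g f m) ≤ eLpNorm (gain + loss) p volume :=
        eLpNorm_mono_enorm fun v =>
          (enorm_Qcoag_mul_jap_pow_le g f m k v).trans_eq (enorm_eq_self _).symm
    _ ≤ eLpNorm gain p volume + eLpNorm loss p volume := eLpNorm_add_le ?_ ?_ hp
    _ ≤ _ := add_le_add (eLpNorm_gain_le hp hG hF (Finset.mem_Icc.1 hm).2) (eLpNorm_loss_le ?_ hm)
    _ = _ := by
      simp only [G, F, eLpNorm_weightedENorm, lintegral_weightedENorm]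
      ring
  · have hmem n (hn : n ∈ Finset.Ico 1 m) := mem_Icc_and_sub_mem_Icc (Finset.mem_Icc.1 hm).2 hn
    exact (Finset.measurable_sum _ fun n hn =>
      (measurable_gainIntegral (hG n (hmem n hn).1) (hF _ (hmem n hn).2) m n).const_mul
        _).aestronglyMeasurable
  · exact (Finset.measurable_sum _ fun n _ =>
      (hG m hm).mul_const _).const_mul _ |>.aestronglyMeasurable
  · simpa only [F, lintegral_weightedENorm] using hSf

end

theorem statement0_general (d M : ℕ) (p : ℝ≥0∞) (hp : 1 ≤ p) (k : ℕ) :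
    ∃ C : ℝ≥0, ∀ g f : ℕ → Euc d → ℝ,
      (∀ m ∈ Finset.Icc 1 M, Measurable (g m)) →
      (∀ m ∈ Finset.Icc 1 M, Measurable (f m)) →
      (∀ m ∈ Finset.Icc 1 M, ∀ v, 0 ≤ g m v) →
      (∀ m ∈ Finset.Icc 1 M, ∀ v, 0 ≤ f m v) →
      (∑ m ∈ Finset.Icc 1 M, wnorm d p (k + 1) (g m)) < ∞ →
      (∑ m ∈ Finset.Icc 1 M, wnorm d 1 (k + 1) (f m)) < ∞ →
      (∀ m ∈ Finset.Icc 1 M,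
        wnorm d p k (Qcoag d M g f m) ≤
          (C : ℝ≥0∞) * (∑ m ∈ Finset.Icc 1 M, wnorm d p (k + 1) (g m)) *
            (∑ m ∈ Finset.Icc 1 M, wnorm d 1 (k + 1) (f m))) ∧
      (∑ m ∈ Finset.Icc 1 M, wnorm d p k (Qcoag d M g f m)) ≤
        (M : ℝ≥0∞) * (C : ℝ≥0∞) * (∑ m ∈ Finset.Icc 1 M, wnorm d p (k + 1) (g m)) *
          (∑ m ∈ Finset.Icc 1 M, wnorm d 1 (k + 1) (f m)) := by
  refine ⟨M ^ 3 + 2, fun g f hg hf _ _ _ hSf => ?_⟩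
  have hQ : ∀ m ∈ Finset.Icc 1 M, wnorm d p k (Qcoag d M g f m) ≤
      ((M ^ 3 + 2 : ℝ≥0) : ℝ≥0∞) * (∑ m ∈ Finset.Icc 1 M, wnorm d p (k + 1) (g m)) *
        (∑ m ∈ Finset.Icc 1 M, wnorm d 1 (k + 1) (f m)) := fun m hm => by
    push_cast
    exact wnorm_Qcoag_le hp k hg hf hSf.ne hm
  refine ⟨hQ, (Finset.sum_le_sum hQ).trans_eq ?_⟩
  rw [Finset.sum_const, Nat.card_Icc, Nat.add_sub_cancel, nsmul_eq_mul, mul_assoc, mul_assoc,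
    mul_assoc]

/-- boundedness of the coagulation operator on weighted L^p spaces:
‖Q_m(g,f)‖_{p,k} ≤ C ‖g‖_{p,M,k+1} ‖f‖_{1,M,k+1} and the summed version. -/
theorem statement0 (d M : ℕ) (hd : 1 ≤ d) (hM : 1 ≤ M) (p : ℝ≥0∞) (hp : 1 ≤ p) (k : ℕ) :
    ∃ C : ℝ≥0, ∀ g f : ℕ → Euc d → ℝ,
      (∀ m ∈ Finset.Icc 1 M, Measurable (g m)) →
      (∀ m ∈ Finset.Icc 1 M, Measurable (f m)) →
      (∀ m ∈ Finset.Icc 1 M, ∀ v, 0 ≤ g m v) →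
      (∀ m ∈ Finset.Icc 1 M, ∀ v, 0 ≤ f m v) →
      (∑ m ∈ Finset.Icc 1 M, wnorm d p (k + 1) (g m)) < ∞ →
      (∑ m ∈ Finset.Icc 1 M, wnorm d 1 (k + 1) (f m)) < ∞ →
      (∀ m ∈ Finset.Icc 1 M,
        wnorm d p k (Qcoag d M g f m) ≤
          (C : ℝ≥0∞) * (∑ m ∈ Finset.Icc 1 M, wnorm d p (k + 1) (g m)) *
            (∑ m ∈ Finset.Icc 1 M, wnorm d 1 (k + 1) (f m))) ∧
      (∑ m ∈ Finset.Icc 1 M, wnorm d p k (Qcoag d M g f m)) ≤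
        (M : ℝ≥0∞) * (C : ℝ≥0∞) * (∑ m ∈ Finset.Icc 1 M, wnorm d p (k + 1) (g m)) *
          (∑ m ∈ Finset.Icc 1 M, wnorm d 1 (k + 1) (f m)) :=
  statement0_general d M p hp k
end
end

section
/- Let d ≥ 1, M ≥ 1 be integers and let f_1,…,f_M : ℝ^d → [0,∞) be measurable functions with ∫_{ℝ^d} f_n(w)⟨w⟩ dw < ∞ for every n. Then ∑_{m=1}^{M} ∑_{n=1}^{m−1} m ∬_{ℝ^d×ℝ^d} f_n(w) f_{m−n}(w') |w − w'| dw dw' ≤ 2 ∑_{m=1}^{M} ∑_{n=1}^{M} m ∬_{ℝ^d×ℝ^d} f_m(v) f_n(w) |v − w| dv dw; equivalently, ∑_{m=1}^M m ∫_{ℝ^d} Q_m(f,f)(v) dv ≤ 0. -/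
open MeasureTheory Real Filter
open scoped ENNReal NNReal

noncomputable section

/-!
Write `C(g, h) = ∬ g(v) h(w) |v - w| dv dw`. In the gain term of `Q_m`, `w' = cvar m n v w`
is the homothety of ratio `c = m / n ≥ 1` centred at `w`: it stretches `|v - w|` by `c` and
Lebesgue measure by `c ^ d`, so against the weight `(m / n) ^ 2` a factor `c ^ (1 - d) ≤ 1` is
left, and the gain part of `∫ Q_m` is at most `∑_{n<m} C(f_n, f_{m-n})`, while its loss part
is exactly `2 ∑_n C(f_m, f_n)`. The pairs `(n, m - n)` inject into `[1, M]²`, the weight `m`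
splits as `n + (m - n)`, and the symmetry of `C` turns the two halves into the factor `2`.
Finally `|v - w| ≤ ⟨v⟩⟨w⟩`, so the first moments make every `C(f_a, f_b)` finite and the
real integrals may be computed through the Lebesgue ones.
-/

namespace Coagulation

open Module

theorem integral_integral_eq_toReal_lintegral {α β : Type*} [MeasurableSpace α]
    [MeasurableSpace β] {μ : Measure α} {ν : Measure β} [SFinite ν] {F : α → β → ℝ}
    (hF : Measurable (Function.uncurry F)) (hF0 : ∀ x y, 0 ≤ F x y)
    (hfin : ∫⁻ x, ∫⁻ y, ENNReal.ofReal (F x y) ∂ν ∂μ ≠ ∞) :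
    Integrable (fun x => ∫ y, F x y ∂ν) μ ∧
      ∫ x, ∫ y, F x y ∂ν ∂μ = (∫⁻ x, ∫⁻ y, ENNReal.ofReal (F x y) ∂ν ∂μ).toReal := by
  have hinner : ∀ x, ∫ y, F x y ∂ν = (∫⁻ y, ENNReal.ofReal (F x y) ∂ν).toReal := fun x =>
    integral_eq_lintegral_of_nonneg_ae (ae_of_all _ (hF0 x))
      (hF.comp measurable_prodMk_left).aestronglyMeasurable
  have hK : Measurable fun x => ∫⁻ y, ENNReal.ofReal (F x y) ∂ν :=
    hF.ennreal_ofReal.lintegral_prod_right'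
  simp_rw [hinner]
  exact ⟨integrable_toReal_of_lintegral_ne_top hK.aemeasurable hfin,
    integral_toReal hK.aemeasurable (ae_lt_top hK hfin)⟩

section Collision

variable {E : Type*} [NormedAddCommGroup E] [MeasurableSpace E]

def collisionIntegral (μ : Measure E) (g h : E → ℝ) : ℝ≥0∞ :=
  ∫⁻ v, ∫⁻ w, ENNReal.ofReal (g v * h w * ‖v - w‖) ∂μ ∂μ

theorem collisionIntegral_comm [OpensMeasurableSpace E] [SecondCountableTopology E]
    (μ : Measure E) [SFinite μ] {g h : E → ℝ} (hg : Measurable g) (hh : Measurable h) :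
    collisionIntegral μ g h = collisionIntegral μ h g := by
  rw [collisionIntegral, lintegral_lintegral_swap (by fun_prop)]
  refine lintegral_congr fun v => lintegral_congr fun w => ?_
  rw [norm_sub_rev, mul_comm (g w)]

theorem integrable_and_integral_mul_integral_eq [OpensMeasurableSpace E]
    [SecondCountableTopology E] (μ : Measure E) [SFinite μ] {g h : E → ℝ} (hg : Measurable g)
    (hh : Measurable h) (hg0 : ∀ v, 0 ≤ g v) (hh0 : ∀ w, 0 ≤ h w)
    (hfin : collisionIntegral μ g h ≠ ∞) :
    Integrable (fun v => g v * ∫ w, h w * ‖v - w‖ ∂μ) μ ∧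
      ∫ v, g v * ∫ w, h w * ‖v - w‖ ∂μ ∂μ = (collisionIntegral μ g h).toReal := by
  simp_rw [← integral_const_mul, ← mul_assoc]
  exact integral_integral_eq_toReal_lintegral (by fun_prop)
    (fun v w => mul_nonneg (mul_nonneg (hg0 v) (hh0 w)) (norm_nonneg _)) hfin

end Collision

section Homothety

variable {E : Type*} [NormedAddCommGroup E] [NormedSpace ℝ E] [MeasurableSpace E] [BorelSpace E]
  [FiniteDimensional ℝ E] (μ : Measure E) [μ.IsAddHaarMeasure]

theorem lintegral_comp_homothety (g : E → ℝ≥0∞) {c : ℝ} (hc : c ≠ 0) (w : E) :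
    ∫⁻ v, g (w + c • (v - w)) ∂μ = ENNReal.ofReal |(c ^ finrank ℝ E)⁻¹| * ∫⁻ u, g u ∂μ := by
  rw [lintegral_sub_right_eq_self (fun v => g (w + c • v)) w]
  refine (lintegral_map_equiv (fun v => g (w + v)) (MeasurableEquiv.smul₀ c hc)).symm.trans ?_
  rw [MeasurableEquiv.coe_smul₀, Measure.map_addHaar_smul μ hc, lintegral_smul_measure,
    lintegral_add_left_eq_self, smul_eq_mul]

theorem ofReal_sq_mul_lintegral_homothety_le (hE : 1 ≤ finrank ℝ E) {c : ℝ} (hc : 1 ≤ c)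
    (p : E → ℝ) (w : E) :
    ENNReal.ofReal (c ^ 2) * ∫⁻ v, ENNReal.ofReal (p (w + c • (v - w)) * ‖v - w‖) ∂μ
      ≤ ∫⁻ u, ENNReal.ofReal (p u * ‖u - w‖) ∂μ := by
  have hc0 : 0 < c := by linarith
  have hpt : ∀ v, ENNReal.ofReal (p (w + c • (v - w)) * ‖v - w‖)
      = ENNReal.ofReal c⁻¹ *
        (fun u => ENNReal.ofReal (p u * ‖u - w‖)) (w + c • (v - w)) := by
    intro v
    rw [← ENNReal.ofReal_mul (by positivity), add_sub_cancel_left, norm_smul,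
      Real.norm_of_nonneg hc0.le]
    congr 1
    field_simp
  have hcoef : c ^ 2 * (c⁻¹ * |(c ^ finrank ℝ E)⁻¹|) ≤ 1 := by
    rw [abs_of_pos (by positivity)]
    calc c ^ 2 * (c⁻¹ * (c ^ finrank ℝ E)⁻¹) = c / c ^ finrank ℝ E := by field_simp
      _ ≤ 1 := div_le_one_of_le₀ (le_self_pow₀ hc (by omega)) (by positivity)
  rw [lintegral_congr hpt, lintegral_const_mul' _ _ ENNReal.ofReal_ne_top,
    lintegral_comp_homothety μ (fun u => ENNReal.ofReal (p u * ‖u - w‖)) hc0.ne', ← mul_assoc,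
    ← mul_assoc, ← ENNReal.ofReal_mul (by positivity), ← ENNReal.ofReal_mul (by positivity),
    mul_assoc]
  exact mul_le_of_le_one_left' (ENNReal.ofReal_le_one.2 hcoef)

theorem ofReal_sq_mul_lintegral_lintegral_homothety_le (hE : 1 ≤ finrank ℝ E) {c : ℝ}
    (hc : 1 ≤ c) {p q : E → ℝ} (hp : Measurable p) (hq : Measurable q) :
    ENNReal.ofReal (c ^ 2) *
        ∫⁻ v, ∫⁻ w, ENNReal.ofReal (p (w + c • (v - w)) * q w * ‖v - w‖) ∂μ ∂μ
      ≤ collisionIntegral μ p q := by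
  rw [collisionIntegral, lintegral_lintegral_swap (by fun_prop),
    ← lintegral_const_mul' _ _ ENNReal.ofReal_ne_top]
  conv_rhs => rw [lintegral_lintegral_swap (by fun_prop)]
  exact lintegral_mono fun w =>
    ofReal_sq_mul_lintegral_homothety_le μ hE hc (fun u => p u * q w) w

theorem integrable_and_sq_mul_integral_homothety_le (hE : 1 ≤ finrank ℝ E) {c : ℝ} (hc : 1 ≤ c)
    {p q : E → ℝ} (hp : Measurable p) (hq : Measurable q) (hp0 : ∀ u, 0 ≤ p u)
    (hq0 : ∀ u, 0 ≤ q u) (hfin : collisionIntegral μ p q ≠ ∞) :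
    Integrable (fun v => ∫ w, p (w + c • (v - w)) * q w * ‖v - w‖ ∂μ) μ ∧
      c ^ 2 * ∫ v, ∫ w, p (w + c • (v - w)) * q w * ‖v - w‖ ∂μ ∂μ
        ≤ (collisionIntegral μ p q).toReal := by
  have hle := ofReal_sq_mul_lintegral_lintegral_homothety_le μ hE hc hp hq
  have hgain_fin :
      ∫⁻ v, ∫⁻ w, ENNReal.ofReal (p (w + c • (v - w)) * q w * ‖v - w‖) ∂μ ∂μ ≠ ∞ := by
    intro h
    rw [h, ENNReal.mul_top (ENNReal.ofReal_pos.2 (by positivity)).ne', top_le_iff] at hle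
    exact hfin hle
  obtain ⟨hint, heq⟩ := integral_integral_eq_toReal_lintegral (μ := μ) (ν := μ) (by fun_prop)
    (fun v w => mul_nonneg (mul_nonneg (hp0 _) (hq0 w)) (norm_nonneg _)) hgain_fin
  refine ⟨hint, ?_⟩
  rw [heq, ← ENNReal.toReal_ofReal (sq_nonneg c), ← ENNReal.toReal_mul]
  exact ENNReal.toReal_mono hfin hle

end Homothety

theorem sum_sum_Ico_mul_le_two_mul_sum_sum {R : Type*} [CommSemiring R] [PartialOrder R]
    [IsOrderedRing R] (M : ℕ) (I : ℕ → ℕ → R)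
    (hI0 : ∀ a ∈ Finset.Icc 1 M, ∀ b ∈ Finset.Icc 1 M, 0 ≤ I a b)
    (hsymm : ∀ a ∈ Finset.Icc 1 M, ∀ b ∈ Finset.Icc 1 M, I a b = I b a) :
    ∑ m ∈ Finset.Icc 1 M, ∑ n ∈ Finset.Ico 1 m, (m : R) * I n (m - n)
      ≤ 2 * ∑ m ∈ Finset.Icc 1 M, ∑ n ∈ Finset.Icc 1 M, (m : R) * I m n := by
  set S := Finset.Icc 1 M ×ˢ Finset.Icc 1 M
  calc ∑ m ∈ Finset.Icc 1 M, ∑ n ∈ Finset.Ico 1 m, (m : R) * I n (m - n)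
      = ∑ p ∈ S with p.1 + p.2 ≤ M, ((p.1 + p.2 : ℕ) : R) * I p.1 p.2 := by
        rw [Finset.sum_sigma']
        refine Finset.sum_nbij' (fun p => (p.2, p.1 - p.2)) (fun p => ⟨p.1 + p.2, p.1⟩)
          ?_ ?_ ?_ ?_ ?_
        · rintro ⟨m, n⟩ h
          simp only [Finset.mem_sigma, Finset.mem_Icc, Finset.mem_Ico] at h
          simp only [S, Finset.mem_filter, Finset.mem_product, Finset.mem_Icc]
          omega
        · rintro ⟨a, b⟩ h
          simp only [S, Finset.mem_filter, Finset.mem_product, Finset.mem_Icc] at h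
          simp only [Finset.mem_sigma, Finset.mem_Icc, Finset.mem_Ico]
          omega
        · rintro ⟨m, n⟩ h
          simp only [Finset.mem_sigma, Finset.mem_Ico] at h
          simp only [Sigma.mk.injEq, heq_eq_eq, and_true]
          omega
        · rintro ⟨a, b⟩ -
          simp
        · rintro ⟨m, n⟩ h
          simp only [Finset.mem_sigma, Finset.mem_Ico] at h
          rw [Nat.add_sub_cancel' h.2.2.le]
    _ ≤ ∑ p ∈ S, ((p.1 + p.2 : ℕ) : R) * I p.1 p.2 :=
        Finset.sum_le_sum_of_subset_of_nonneg (Finset.filter_subset _ _) fun p hp _ =>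
          mul_nonneg (Nat.cast_nonneg _)
            (hI0 _ (Finset.mem_product.1 hp).1 _ (Finset.mem_product.1 hp).2)
    _ = 2 * ∑ m ∈ Finset.Icc 1 M, ∑ n ∈ Finset.Icc 1 M, (m : R) * I m n := by
        simp only [S, Finset.sum_product, Nat.cast_add, add_mul, Finset.sum_add_distrib]
        rw [Finset.sum_comm (f := fun (m n : ℕ) => (n : R) * I m n), two_mul]
        congr 1
        refine Finset.sum_congr rfl fun n hn => Finset.sum_congr rfl fun m hm => ?_
        rw [hsymm m hm n hn]

@[fun_prop]
theorem measurable_jap {d : ℕ} : Measurable (jap : Euc d → ℝ) := by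
  unfold jap
  fun_prop

theorem norm_sub_le_jap_mul_jap {d : ℕ} (v w : Euc d) : ‖v - w‖ ≤ jap v * jap w := by
  have hsq : (jap v * jap w) ^ 2 = (1 + ‖v‖ ^ 2) * (1 + ‖w‖ ^ 2) := by
    rw [mul_pow, jap, jap, Real.sq_sqrt (by positivity), Real.sq_sqrt (by positivity)]
  have hsum : ‖v‖ + ‖w‖ ≤ jap v * jap w := by
    refine le_of_sq_le_sq ?_ (by unfold jap; positivity)
    rw [hsq]
    nlinarith [sq_nonneg (‖v‖ * ‖w‖ - 1)]
  exact (norm_sub_le v w).trans hsum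

theorem collisionIntegral_le_mul_moments {d : ℕ} (μ : Measure (Euc d)) {g h : Euc d → ℝ}
    (hg : Measurable g) (hh : Measurable h) (hg0 : ∀ v, 0 ≤ g v) (hh0 : ∀ v, 0 ≤ h v) :
    collisionIntegral μ g h
      ≤ (∫⁻ v, ENNReal.ofReal (g v * jap v) ∂μ) * ∫⁻ w, ENNReal.ofReal (h w * jap w) ∂μ := by
  rw [← lintegral_lintegral_mul (by fun_prop) (by fun_prop)]
  refine lintegral_mono fun v => lintegral_mono fun w => ?_
  rw [← ENNReal.ofReal_mul (mul_nonneg (hg0 v) (by unfold jap; positivity))]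
  refine ENNReal.ofReal_le_ofReal ?_
  calc g v * h w * ‖v - w‖ ≤ g v * h w * (jap v * jap w) :=
        mul_le_mul_of_nonneg_left (norm_sub_le_jap_mul_jap v w) (mul_nonneg (hg0 v) (hh0 w))
    _ = g v * jap v * (h w * jap w) := by ring

theorem cvar_eq {d m n : ℕ} (hn : n ≠ 0) (v w : Euc d) :
    cvar d m n v w = w + ((m : ℝ) / n) • (v - w) := by
  rw [cvar]
  match_scalars <;> field_simp
  ring

theorem integral_Qcoag_le {d M : ℕ} (hd : 1 ≤ d) {f : ℕ → Euc d → ℝ}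
    (hmeas : ∀ n ∈ Finset.Icc 1 M, Measurable (f n))
    (hpos : ∀ n ∈ Finset.Icc 1 M, ∀ v, 0 ≤ f n v)
    (hfin : ∀ a ∈ Finset.Icc 1 M, ∀ b ∈ Finset.Icc 1 M, collisionIntegral volume (f a) (f b) ≠ ∞)
    {m : ℕ} (hm : m ∈ Finset.Icc 1 M) :
    ∫ v, Qcoag d M f f m v
      ≤ ∑ n ∈ Finset.Ico 1 m, (collisionIntegral volume (f n) (f (m - n))).toReal
        - 2 * ∑ n ∈ Finset.Icc 1 M, (collisionIntegral volume (f m) (f n)).toReal := by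
  have hmem : ∀ n ∈ Finset.Ico 1 m, n ∈ Finset.Icc 1 M ∧ m - n ∈ Finset.Icc 1 M := by
    intro n hn
    simp only [Finset.mem_Icc, Finset.mem_Ico] at hm hn ⊢
    omega
  have hgain : ∀ n ∈ Finset.Ico 1 m,
      Integrable (fun v => ∫ w, f n (cvar d m n v w) * f (m - n) w * ‖v - w‖) ∧
        ((m : ℝ) / n) ^ 2 * ∫ v, ∫ w, f n (cvar d m n v w) * f (m - n) w * ‖v - w‖
          ≤ (collisionIntegral volume (f n) (f (m - n))).toReal := by
    intro n hn
    obtain ⟨hn1, hnm⟩ := Finset.mem_Ico.1 hn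
    obtain ⟨ha, hb⟩ := hmem n hn
    simp only [cvar_eq (by omega : n ≠ 0)]
    exact integrable_and_sq_mul_integral_homothety_le volume (by simpa using hd)
      ((one_le_div (by positivity)).2 (by exact_mod_cast hnm.le))
      (hmeas n ha) (hmeas _ hb) (hpos n ha) (hpos _ hb) (hfin n ha _ hb)
  have hloss : ∀ n ∈ Finset.Icc 1 M,
      Integrable (fun v => f m v * ∫ w, f n w * ‖v - w‖) ∧
        ∫ v, f m v * ∫ w, f n w * ‖v - w‖ = (collisionIntegral volume (f m) (f n)).toReal :=
    fun n hn => integrable_and_integral_mul_integral_eq volume (hmeas m hm) (hmeas n hn)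
      (hpos m hm) (hpos n hn) (hfin m hm n hn)
  unfold Qcoag
  rw [integral_sub (integrable_finsetSum _ fun n hn => (hgain n hn).1.const_mul _)
      ((integrable_finsetSum _ fun n hn => (hloss n hn).1).const_mul 2),
    integral_finsetSum _ fun n hn => (hgain n hn).1.const_mul _, integral_const_mul,
    integral_finsetSum _ fun n hn => (hloss n hn).1,
    Finset.sum_congr rfl fun n hn => (hloss n hn).2]
  gcongr with n hn
  rw [integral_const_mul]
  exact (hgain n hn).2

end Coagulation

open Coagulation

theorem statement1_general (d M : ℕ) (hd : 1 ≤ d) (f : ℕ → Euc d → ℝ)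
    (hmeas : ∀ n ∈ Finset.Icc 1 M, Measurable (f n))
    (hpos : ∀ n ∈ Finset.Icc 1 M, ∀ v, 0 ≤ f n v)
    (hmom : ∀ n ∈ Finset.Icc 1 M, (∫⁻ w, ENNReal.ofReal (f n w * jap w)) < ∞) :
    (∑ m ∈ Finset.Icc 1 M, ∑ n ∈ Finset.Ico 1 m, (m : ℝ≥0∞) *
        ∫⁻ w, ∫⁻ w', ENNReal.ofReal (f n w * f (m - n) w' * ‖w - w'‖))
      ≤ 2 * ∑ m ∈ Finset.Icc 1 M, ∑ n ∈ Finset.Icc 1 M, (m : ℝ≥0∞) *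
        ∫⁻ v, ∫⁻ w, ENNReal.ofReal (f m v * f n w * ‖v - w‖) ∧
    (∑ m ∈ Finset.Icc 1 M, (m : ℝ) * ∫ v, Qcoag d M f f m v) ≤ 0 := by
  set C : ℕ → ℕ → ℝ≥0∞ := fun a b => collisionIntegral volume (f a) (f b)
  have hsymm : ∀ a ∈ Finset.Icc 1 M, ∀ b ∈ Finset.Icc 1 M, C a b = C b a :=
    fun a ha b hb => collisionIntegral_comm volume (hmeas a ha) (hmeas b hb)
  have hfin : ∀ a ∈ Finset.Icc 1 M, ∀ b ∈ Finset.Icc 1 M, C a b ≠ ∞ := fun a ha b hb =>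
    ((collisionIntegral_le_mul_moments volume (hmeas a ha) (hmeas b hb) (hpos a ha)
      (hpos b hb)).trans_lt (ENNReal.mul_lt_top (hmom a ha) (hmom b hb))).ne
  refine ⟨sum_sum_Ico_mul_le_two_mul_sum_sum M C (fun _ _ _ _ => zero_le) hsymm, ?_⟩
  calc ∑ m ∈ Finset.Icc 1 M, (m : ℝ) * ∫ v, Qcoag d M f f m v
      ≤ ∑ m ∈ Finset.Icc 1 M, (m : ℝ) * (∑ n ∈ Finset.Ico 1 m, (C n (m - n)).toReal
          - 2 * ∑ n ∈ Finset.Icc 1 M, (C m n).toReal) :=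
        Finset.sum_le_sum fun m hm => mul_le_mul_of_nonneg_left
          (integral_Qcoag_le hd hmeas hpos hfin hm) (Nat.cast_nonneg m)
    _ = ∑ m ∈ Finset.Icc 1 M, ∑ n ∈ Finset.Ico 1 m, (m : ℝ) * (C n (m - n)).toReal
          - 2 * ∑ m ∈ Finset.Icc 1 M, ∑ n ∈ Finset.Icc 1 M, (m : ℝ) * (C m n).toReal := by
        simp only [mul_sub, Finset.mul_sum, Finset.sum_sub_distrib, mul_left_comm _ (2 : ℝ)]
    _ ≤ 0 := sub_nonpos.2 <| sum_sum_Ico_mul_le_two_mul_sum_sum M (fun a b => (C a b).toReal)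
          (fun _ _ _ _ => ENNReal.toReal_nonneg) fun a ha b hb => by rw [hsymm a ha b hb]

/-- the gain term of ∑_m m ∫ Q_m(f,f) is dominated by the loss term;
equivalently ∑_m m ∫ Q_m(f,f) ≤ 0. -/
theorem statement1 (d M : ℕ) (hd : 1 ≤ d) (hM : 1 ≤ M) (f : ℕ → Euc d → ℝ)
    (hmeas : ∀ n ∈ Finset.Icc 1 M, Measurable (f n))
    (hpos : ∀ n ∈ Finset.Icc 1 M, ∀ v, 0 ≤ f n v)
    (hmom : ∀ n ∈ Finset.Icc 1 M, (∫⁻ w, ENNReal.ofReal (f n w * jap w)) < ∞) :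
    (∑ m ∈ Finset.Icc 1 M, ∑ n ∈ Finset.Ico 1 m, (m : ℝ≥0∞) *
        ∫⁻ w, ∫⁻ w', ENNReal.ofReal (f n w * f (m - n) w' * ‖w - w'‖))
      ≤ 2 * ∑ m ∈ Finset.Icc 1 M, ∑ n ∈ Finset.Icc 1 M, (m : ℝ≥0∞) *
        ∫⁻ v, ∫⁻ w, ENNReal.ofReal (f m v * f n w * ‖v - w‖) ∧
    (∑ m ∈ Finset.Icc 1 M, (m : ℝ) * ∫ v, Qcoag d M f f m v) ≤ 0 :=
  statement1_general d M hd f hmeas hpos hmom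
end
end

section
/- Let d ≥ 1, M ≥ 1 be integers and let f = (f_1,…,f_M) and g = (g_1,…,g_M) be families of Schwartz functions on ℝ^d. Then for each m = 1,…,M the function Q_m(f,g) is differentiable on ℝ^d and, for every i ∈ {1,…,d} and every v ∈ ℝ^d, ∂_{v_i} Q_m(f,g)(v) = Q_m(∂_i f, g)(v) + Q_m(f, ∂_i g)(v), where ∂_i f denotes the family (∂_{v_i} f_1, …, ∂_{v_i} f_M) and likewise for ∂_i g. -/
open MeasureTheory Real Filter
open scoped ENNReal NNReal

noncomputable section

/-!
Substituting `w = v - u` turns each integral in `Q_m` into `∫ φ (v + c u) ψ (v - u) |u| du`, with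
`c = (m - n) / n` in the gain terms and `φ ≡ 1`, `c = 0` in the loss terms, so that `v` enters only
through the two smooth factors. Such an integral may be differentiated under the integral sign: for
`|x - v| ≤ 1` the Peetre-type bound `1 + |u| ≤ (2 + |v|) (1 + |x - u|)` lets the decay of `ψ` and
`∇ψ` absorb the weight `|u|`, leaving the majorant `(1 + |u|) ^ (-N)`, which is integrable for any
measure of temperate growth. The Leibniz rule is then the product rule under the integral.
-/

section KernelConvolution

variable {E F : Type*} [NormedAddCommGroup E] [NormedAddCommGroup F]

def HasPolyDecay (k : ℕ) (ψ : E → F) : Prop :=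
  ∃ C, ∀ y, (1 + ‖y‖) ^ k * ‖ψ y‖ ≤ C

theorem hasPolyDecay_zero_iff {ψ : E → F} : HasPolyDecay 0 ψ ↔ ∃ C, ∀ y, ‖ψ y‖ ≤ C := by
  simp [HasPolyDecay]

theorem one_add_norm_le_mul_one_add_norm_sub {x v : E} (hx : ‖x - v‖ ≤ 1) (u : E) :
    1 + ‖u‖ ≤ (2 + ‖v‖) * (1 + ‖x - u‖) := by
  have hu : ‖u‖ ≤ ‖x‖ + ‖x - u‖ := by simpa using norm_sub_le x (x - u)
  have hxv : ‖x‖ ≤ ‖x - v‖ + ‖v‖ := norm_le_norm_sub_add x v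
  nlinarith [norm_nonneg (x - u), norm_nonneg v]

theorem mul_mul_norm_le_of_norm_sub_le_one {N : ℕ} {x v : E} (hx : ‖x - v‖ ≤ 1) (u : E)
    {α β A B : ℝ} (hα : 0 ≤ α) (hβ : 0 ≤ β) (hαA : α ≤ A)
    (hβB : (1 + ‖x - u‖) ^ (N + 1) * β ≤ B) :
    α * β * ‖u‖ ≤ A * B * (2 + ‖v‖) ^ (N + 1) * (1 + ‖u‖) ^ (-(N : ℝ)) := by
  rw [Real.rpow_neg (by positivity), Real.rpow_natCast, ← div_eq_mul_inv,
    le_div_iff₀ (by positivity)]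
  calc α * β * ‖u‖ * (1 + ‖u‖) ^ N ≤ α * β * (1 + ‖u‖) ^ (N + 1) := by
        rw [pow_succ, mul_assoc, mul_comm ‖u‖]; gcongr; linarith
    _ ≤ α * β * ((2 + ‖v‖) * (1 + ‖x - u‖)) ^ (N + 1) := by
        gcongr; exact one_add_norm_le_mul_one_add_norm_sub hx u
    _ = α * (2 + ‖v‖) ^ (N + 1) * ((1 + ‖x - u‖) ^ (N + 1) * β) := by rw [mul_pow]; ring
    _ ≤ A * (2 + ‖v‖) ^ (N + 1) * B := by
        have hA : 0 ≤ A := hα.trans hαA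
        gcongr
    _ = A * B * (2 + ‖v‖) ^ (N + 1) := by ring

variable [NormedSpace ℝ E]

structure HasC1Decay (k : ℕ) (ψ : E → ℝ) : Prop where
  contDiff : ContDiff ℝ 1 ψ
  decay : HasPolyDecay k ψ
  decay_fderiv : HasPolyDecay k (fderiv ℝ ψ)

theorem HasPolyDecay.clm_apply {k : ℕ} {ψ : E → E →L[ℝ] ℝ} (h : HasPolyDecay k ψ) (e : E) :
    HasPolyDecay k fun y => ψ y e := by
  obtain ⟨C, hC⟩ := h
  refine ⟨C * ‖e‖, fun y => ?_⟩
  calc (1 + ‖y‖) ^ k * ‖ψ y e‖ ≤ (1 + ‖y‖) ^ k * (‖ψ y‖ * ‖e‖) := by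
        gcongr; exact (ψ y).le_opNorm e
    _ ≤ C * ‖e‖ := by rw [← mul_assoc]; gcongr; exact hC y

theorem hasC1Decay_const (c : ℝ) : HasC1Decay 0 fun _ : E => c :=
  ⟨contDiff_const, ⟨‖c‖, fun _ => by simp⟩, ⟨0, fun _ => by simp⟩⟩

theorem SchwartzMap.hasC1Decay (ψ : SchwartzMap E ℝ) (k : ℕ) : HasC1Decay k ψ := by
  refine ⟨ψ.smooth 1, ?_, ?_⟩
  · exact ⟨_, fun y => by
      simpa using
        SchwartzMap.one_add_le_sup_seminorm_apply (𝕜 := ℝ) (m := (k, 0)) le_rfl le_rfl ψ y⟩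
  · exact ⟨_, fun y => by
      simpa [← norm_iteratedFDeriv_fderiv] using
        SchwartzMap.one_add_le_sup_seminorm_apply (𝕜 := ℝ) (m := (k, 1)) le_rfl le_rfl ψ y⟩

def kernelConvIntegrandFDeriv (c : ℝ) (φ ψ : E → ℝ) (x u : E) : E →L[ℝ] ℝ :=
  ‖u‖ • (φ (x + c • u) • fderiv ℝ ψ (x - u) + ψ (x - u) • fderiv ℝ φ (x + c • u))

theorem exists_norm_kernelConvIntegrandFDeriv_le {N : ℕ} {φ ψ : E → ℝ} (hφ : HasC1Decay 0 φ)
    (hψ : HasC1Decay (N + 1) ψ) (c : ℝ) (v : E) :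
    ∃ K, ∀ u, ∀ x ∈ Metric.ball v 1,
      ‖kernelConvIntegrandFDeriv c φ ψ x u‖ ≤ K * (1 + ‖u‖) ^ (-(N : ℝ)) := by
  obtain ⟨A₀, hA₀⟩ := hasPolyDecay_zero_iff.mp hφ.decay
  obtain ⟨A₁, hA₁⟩ := hasPolyDecay_zero_iff.mp hφ.decay_fderiv
  obtain ⟨B₀, hB₀⟩ := hψ.decay
  obtain ⟨B₁, hB₁⟩ := hψ.decay_fderiv
  refine ⟨(A₀ * B₁ + A₁ * B₀) * (2 + ‖v‖) ^ (N + 1), fun u x hx => ?_⟩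
  have hx : ‖x - v‖ ≤ 1 := (mem_ball_iff_norm.mp hx).le
  calc _ ≤ ‖u‖ * (‖φ (x + c • u)‖ * ‖fderiv ℝ ψ (x - u)‖
          + ‖ψ (x - u)‖ * ‖fderiv ℝ φ (x + c • u)‖) := by
        rw [kernelConvIntegrandFDeriv, norm_smul, norm_norm, ← norm_smul (φ (x + c • u)),
          ← norm_smul (ψ (x - u))]
        gcongr
        exact norm_add_le _ _
    _ = ‖φ (x + c • u)‖ * ‖fderiv ℝ ψ (x - u)‖ * ‖u‖
          + ‖fderiv ℝ φ (x + c • u)‖ * ‖ψ (x - u)‖ * ‖u‖ := by ring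
    _ ≤ A₀ * B₁ * (2 + ‖v‖) ^ (N + 1) * (1 + ‖u‖) ^ (-(N : ℝ))
          + A₁ * B₀ * (2 + ‖v‖) ^ (N + 1) * (1 + ‖u‖) ^ (-(N : ℝ)) :=
        add_le_add
          (mul_mul_norm_le_of_norm_sub_le_one hx u (norm_nonneg _) (norm_nonneg _) (hA₀ _) (hB₁ _))
          (mul_mul_norm_le_of_norm_sub_le_one hx u (norm_nonneg _) (norm_nonneg _) (hA₁ _) (hB₀ _))
    _ = _ := by ring

theorem hasFDerivAt_kernelConv_integrand {φ ψ : E → ℝ} (hφ : ContDiff ℝ 1 φ) (hψ : ContDiff ℝ 1 ψ)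
    (c : ℝ) (x u : E) :
    HasFDerivAt (fun x => φ (x + c • u) * ψ (x - u) * ‖u‖) (kernelConvIntegrandFDeriv c φ ψ x u)
      x := by
  have hφx := (hφ.differentiable one_ne_zero (x + c • u)).hasFDerivAt.comp x
    ((hasFDerivAt_id x).add_const (c • u))
  have hψx := (hψ.differentiable one_ne_zero (x - u)).hasFDerivAt.comp x
    ((hasFDerivAt_id x).sub_const u)
  exact (hφx.mul hψx).mul_const ‖u‖

variable [MeasurableSpace E] {μ : Measure E}

def kernelConv (μ : Measure E) (c : ℝ) (φ ψ : E → ℝ) (x : E) : ℝ :=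
  ∫ u, φ (x + c • u) * ψ (x - u) * ‖u‖ ∂μ

@[simp]
theorem kernelConv_zero_left (c : ℝ) (ψ : E → ℝ) : kernelConv μ c (fun _ => 0) ψ = 0 := by
  ext; simp [kernelConv]

variable [BorelSpace E] [SecondCountableTopology E] [μ.HasTemperateGrowth]

theorem integrable_kernelConv_integrand {φ ψ : E → ℝ} (hφ : Continuous φ) (hψ : Continuous ψ)
    (hφd : HasPolyDecay 0 φ) (hψd : HasPolyDecay (μ.integrablePower + 1) ψ) (c : ℝ) (x : E) :
    Integrable (fun u => φ (x + c • u) * ψ (x - u) * ‖u‖) μ := by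
  obtain ⟨A, hA⟩ := hasPolyDecay_zero_iff.mp hφd
  obtain ⟨B, hB⟩ := hψd
  refine ((μ.integrable_pow_neg_integrablePower).const_mul
    (A * B * (2 + ‖x‖) ^ (μ.integrablePower + 1))).mono' (by fun_prop) (ae_of_all _ fun u => ?_)
  simp only [norm_mul, norm_norm]
  exact mul_mul_norm_le_of_norm_sub_le_one (by simp) u (norm_nonneg _) (norm_nonneg _) (hA _) (hB _)

theorem integrable_kernelConvIntegrandFDeriv {φ ψ : E → ℝ} (hφ : HasC1Decay 0 φ)
    (hψ : HasC1Decay (μ.integrablePower + 1) ψ) (c : ℝ) (v : E) :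
    Integrable (kernelConvIntegrandFDeriv c φ ψ v) μ := by
  obtain ⟨K, hK⟩ := exists_norm_kernelConvIntegrandFDeriv_le hφ hψ c v
  have hφ' := hφ.contDiff.continuous_fderiv one_ne_zero
  have hψ' := hψ.contDiff.continuous_fderiv one_ne_zero
  have hφc := hφ.contDiff.continuous
  have hψc := hψ.contDiff.continuous
  exact ((μ.integrable_pow_neg_integrablePower).const_mul K).mono'
    (by unfold kernelConvIntegrandFDeriv; fun_prop)
    (ae_of_all _ fun u => hK u v (Metric.mem_ball_self one_pos))

theorem hasFDerivAt_kernelConv {φ ψ : E → ℝ} (hφ : HasC1Decay 0 φ)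
    (hψ : HasC1Decay (μ.integrablePower + 1) ψ) (c : ℝ) (v : E) :
    HasFDerivAt (kernelConv μ c φ ψ) (∫ u, kernelConvIntegrandFDeriv c φ ψ v u ∂μ) v := by
  obtain ⟨K, hK⟩ := exists_norm_kernelConvIntegrandFDeriv_le hφ hψ c v
  have hF x := integrable_kernelConv_integrand hφ.contDiff.continuous hψ.contDiff.continuous
    hφ.decay hψ.decay c x
  exact hasFDerivAt_integral_of_dominated_of_fderiv_le (Metric.ball_mem_nhds v one_pos)
    (Eventually.of_forall fun x => (hF x).aestronglyMeasurable) (hF v)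
    (integrable_kernelConvIntegrandFDeriv hφ hψ c v).aestronglyMeasurable (ae_of_all _ hK)
    ((μ.integrable_pow_neg_integrablePower).const_mul _)
    (ae_of_all _ fun u x _ => hasFDerivAt_kernelConv_integrand hφ.contDiff hψ.contDiff c x u)

theorem differentiable_kernelConv {φ ψ : E → ℝ} (hφ : HasC1Decay 0 φ)
    (hψ : HasC1Decay (μ.integrablePower + 1) ψ) (c : ℝ) :
    Differentiable ℝ (kernelConv μ c φ ψ) :=
  fun v => (hasFDerivAt_kernelConv hφ hψ c v).differentiableAt

theorem fderiv_kernelConv_apply {φ ψ : E → ℝ} (hφ : HasC1Decay 0 φ)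
    (hψ : HasC1Decay (μ.integrablePower + 1) ψ) (c : ℝ) (v e : E) :
    fderiv ℝ (kernelConv μ c φ ψ) v e =
      kernelConv μ c (fun y => fderiv ℝ φ y e) ψ v +
        kernelConv μ c φ (fun y => fderiv ℝ ψ y e) v := by
  have hφ' := hφ.contDiff.continuous_fderiv_apply one_ne_zero
  have hψ' := hψ.contDiff.continuous_fderiv_apply one_ne_zero
  rw [(hasFDerivAt_kernelConv hφ hψ c v).fderiv,
    ContinuousLinearMap.integral_apply (integrable_kernelConvIntegrandFDeriv hφ hψ c v),
    kernelConv, kernelConv, ← integral_add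
      (integrable_kernelConv_integrand (by fun_prop) hψ.contDiff.continuous
        (hφ.decay_fderiv.clm_apply e) hψ.decay c v)
      (integrable_kernelConv_integrand hφ.contDiff.continuous (by fun_prop)
        hφ.decay (hψ.decay_fderiv.clm_apply e) c v)]
  congr 1 with u
  simp only [kernelConvIntegrandFDeriv, smul_apply, add_apply, smul_eq_mul]
  ring

end KernelConvolution

theorem cvar_sub {d : ℕ} (m : ℕ) {n : ℕ} (hn : n ≠ 0) (v u : Euc d) :
    cvar d m n v (v - u) = v + (((m : ℝ) - n) / n) • u := by
  have hn' : (n : ℝ) ≠ 0 := Nat.cast_ne_zero.mpr hn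
  rw [cvar, inv_smul_eq_iff₀ hn']
  match_scalars <;> field_simp
  ring

theorem Qcoag_eq_kernelConv {d : ℕ} (M : ℕ) (φ ψ : ℕ → Euc d → ℝ) (m : ℕ) (x : Euc d) :
    Qcoag d M φ ψ m x =
      ∑ n ∈ Finset.Ico 1 m, ((m : ℝ) / n) ^ 2 *
          kernelConv volume (((m : ℝ) - n) / n) (φ n) (ψ (m - n)) x
        - 2 * ∑ n ∈ Finset.Icc 1 M, φ m x * kernelConv volume 0 (fun _ => 1) (ψ n) x := by
  rw [Qcoag]
  congr 1
  · refine Finset.sum_congr rfl fun n hn => ?_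
    have hn : n ≠ 0 := Nat.one_le_iff_ne_zero.mp (Finset.mem_Ico.mp hn).1
    rw [kernelConv, ← integral_sub_left_eq_self _ volume x]
    simp_rw [cvar_sub m hn x, sub_sub_cancel]
  · simp_rw [kernelConv, ← integral_sub_left_eq_self (fun w => ψ _ w * ‖x - w‖) volume x]
    simp [sub_sub_cancel]

theorem statement7_general (d M : ℕ)
    (f g : ℕ → SchwartzMap (Euc d) ℝ) (m : ℕ)
    (i : Fin d) (v : Euc d) :
    DifferentiableAt ℝ (Qcoag d M (fun n => (f n : Euc d → ℝ)) (fun n => (g n : Euc d → ℝ)) m) v ∧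
    pd d i (Qcoag d M (fun n => (f n : Euc d → ℝ)) (fun n => (g n : Euc d → ℝ)) m) v =
      Qcoag d M (fun n => pd d i (f n : Euc d → ℝ)) (fun n => (g n : Euc d → ℝ)) m v +
      Qcoag d M (fun n => (f n : Euc d → ℝ)) (fun n => pd d i (g n : Euc d → ℝ)) m v := by
  have hf n := (f n).hasC1Decay 0
  have hg n := (g n).hasC1Decay ((volume : Measure (Euc d)).integrablePower + 1)
  have hgain n := differentiable_kernelConv (hf n) (hg (m - n)) (((m : ℝ) - n) / n) v
  have hloss n := differentiable_kernelConv (hasC1Decay_const 1) (hg n) 0 v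
  have hderiv := (HasFDerivAt.fun_sum (u := Finset.Ico 1 m) fun n _ =>
      (hgain n).hasFDerivAt.const_mul (((m : ℝ) / n) ^ 2)).fun_sub
    ((HasFDerivAt.fun_sum (u := Finset.Icc 1 M) fun n _ =>
      (f m).differentiableAt.hasFDerivAt.fun_mul (hloss n).hasFDerivAt).const_mul 2)
  rw [funext (Qcoag_eq_kernelConv M _ _ m)]
  refine ⟨hderiv.differentiableAt, ?_⟩
  rw [pd, hderiv.fderiv, Qcoag_eq_kernelConv, Qcoag_eq_kernelConv]
  simp only [sub_apply, sum_apply, add_apply, smul_apply, smul_eq_mul,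
    fderiv_kernelConv_apply (hf _) (hg _), fderiv_kernelConv_apply (hasC1Decay_const 1) (hg _),
    fderiv_fun_const, Pi.zero_apply, zero_apply, kernelConv_zero_left, zero_add]
  delta pd
  simp only [mul_add, Finset.sum_add_distrib, mul_comm (kernelConv volume 0 _ _ v)]
  ring

/-- Leibniz rule for the coagulation operator on Schwartz families:
∂_{v_i} Q_m(f,g) = Q_m(∂_i f, g) + Q_m(f, ∂_i g). -/
theorem statement7 (d M : ℕ) (hd : 1 ≤ d) (hM : 1 ≤ M)
    (f g : ℕ → SchwartzMap (Euc d) ℝ) (m : ℕ) (hm : m ∈ Finset.Icc 1 M)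
    (i : Fin d) (v : Euc d) :
    DifferentiableAt ℝ (Qcoag d M (fun n => (f n : Euc d → ℝ)) (fun n => (g n : Euc d → ℝ)) m) v ∧
    pd d i (Qcoag d M (fun n => (f n : Euc d → ℝ)) (fun n => (g n : Euc d → ℝ)) m) v =
      Qcoag d M (fun n => pd d i (f n : Euc d → ℝ)) (fun n => (g n : Euc d → ℝ)) m v +
      Qcoag d M (fun n => (f n : Euc d → ℝ)) (fun n => pd d i (g n : Euc d → ℝ)) m v :=
  statement7_general d M f g m i v
end
end

section
/- Let d ≥ 1, M ≥ 1 be integers and R > 0. There exists a constant C_R, depending only on R, M and d, such that for every family f = (f_1,…,f_M) of functions in L²(ℝ^d): for each m the integrals defining Q_m^R(f,f)(v) converge absolutely for a.e. v ∈ ℝ^d, Q_m^R(f,f) ∈ L²(ℝ^d), and ∑_{m=1}^M ‖Q_m^R(f,f)‖_{L²(ℝ^d)} ≤ C_R · ( ∑_{m=1}^M ‖f_m‖_{L²(ℝ^d)} )². -/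
open MeasureTheory Real Filter
open scoped ENNReal NNReal

noncomputable section

/-- The indicator of the ball of radius R centered at the origin. -/
def indR (d : ℕ) (R : ℝ) (v : Euc d) : ℝ :=
  (Metric.closedBall (0 : Euc d) R).indicator (fun _ => (1 : ℝ)) v

/-- The truncated coagulation operator Q_m^R(f,f). -/
def Qtrunc (d M : ℕ) (R : ℝ) (f : ℕ → Euc d → ℝ) (m : ℕ) (v : Euc d) : ℝ :=
  indR d R v *
    ((∑ n ∈ Finset.Ico 1 m, ((m : ℝ) / (n : ℝ)) ^ 2 *
        ∫ w, f n (cvar d m n v w) * f (m - n) w * ‖v - w‖ * indR d R w)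
      - 2 * ∑ n ∈ Finset.Icc 1 M, f m v * ∫ w, f n w * ‖v - w‖ * indR d R w)

/-- The Ornstein–Uhlenbeck kernel. -/
def ouKer (d : ℕ) (t : ℝ) (w : Euc d) : ℝ :=
  (2 * Real.pi * (Real.exp (2 * t) - 1)) ^ (-(d : ℝ) / 2) *
    Real.exp (-‖w‖ ^ 2 / (2 * (Real.exp (2 * t) - 1)))

/-- The Ornstein–Uhlenbeck semigroup P_t. -/
def ouSG (d : ℕ) (t : ℝ) (h : Euc d → ℝ) (v : Euc d) : ℝ :=
  if t = 0 then h v else ∫ w, ouKer d t w * h (Real.exp t • v - w)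

/-- The space L²(ℝ^d). -/
abbrev L2 (d : ℕ) := Lp ℝ 2 (volume : Measure (Euc d))

/-- A mild solution of the truncated system on [0,T] with initial datum f⁰:
f_m ∈ C([0,T]; L²) and f_m(t) = P_t f⁰_m + ∫_0^t P_{t−s}(d·f_m(s) + Q_m^R(f(s),f(s))) ds
in L² for every t ∈ [0,T]. -/
structure IsMildSolution (d M : ℕ) (R T : ℝ)
    (f0 : ℕ → Euc d → ℝ) (f : ℕ → ℝ → L2 d) : Prop where
  cont : ∀ m ∈ Finset.Icc 1 M, ContinuousOn (f m) (Set.Icc 0 T)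
  mild : ∀ m ∈ Finset.Icc 1 M, ∀ t ∈ Set.Icc (0 : ℝ) T,
    (f m t : Euc d → ℝ) =ᵐ[volume] fun v =>
      ouSG d t (f0 m) v +
        ∫ s in (0 : ℝ)..t,
          ouSG d (t - s)
            (fun w => (d : ℝ) * (f m s : Euc d → ℝ) w +
              Qtrunc d M R (fun n => (f n s : Euc d → ℝ)) m w) v


/-!
By Cauchy–Schwarz, `|∫ g h φ| ≤ c ‖g‖₂ ‖h‖₂` whenever `|φ| ≤ c`. For `v` in the ball `B(0,R)`
the collision weight `‖v - w‖ 1_B(w)` is at most `2R`, so each gain integral of `Q_m^R(f,f)(v)`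
is bounded by `2R κ ‖f_n‖₂ ‖f_{m-n}‖₂`, where `κ` is the factor by which the affine change of
variables `w ↦ (m v - (m - n) w) / n` scales `L²` norms, and each loss integral, after writing
`1_B = 1_B²`, by `2R ‖f_n‖₂ ‖1_B‖₂`. Hence `|Q_m^R(f,f)| ≤ A 1_B + B |f_m|` pointwise, with `A`
quadratic and `B` linear in `∑ ‖f_k‖₂`, and Minkowski's inequality gives the bound.
-/

open Finset

section LpEstimates

variable {α : Type*} [MeasurableSpace α] {μ : Measure α} {g h φ : α → ℝ}

theorem integrable_mul_mul_of_abs_le (hg : MemLp g 2 μ) (hh : MemLp h 2 μ)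
    (hφ : AEStronglyMeasurable φ μ) {c : ℝ} (hφc : ∀ x, |φ x| ≤ c) :
    Integrable (fun x => g x * h x * φ x) μ :=
  (hg.integrable_mul hh).mul_bdd hφ (Eventually.of_forall hφc)

theorem enorm_integral_mul_mul_le (hg : MemLp g 2 μ) (hh : MemLp h 2 μ) {c : ℝ}
    (hφc : ∀ x, |φ x| ≤ c) :
    ‖∫ x, g x * h x * φ x ∂μ‖ₑ ≤ ENNReal.ofReal c * eLpNorm g 2 μ * eLpNorm h 2 μ :=
  calc ‖∫ x, g x * h x * φ x ∂μ‖ₑ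
      ≤ ∫⁻ x, ‖g x * h x * φ x‖ₑ ∂μ := enorm_integral_le_lintegral_enorm _
    _ ≤ ∫⁻ x, ENNReal.ofReal c * ‖(g * h) x‖ₑ ∂μ := lintegral_mono fun x => by
        rw [enorm_mul, mul_comm, enorm_eq_ofReal_abs (φ x), Pi.mul_apply]
        gcongr
        exact hφc x
    _ = ENNReal.ofReal c * eLpNorm (h • g) 1 μ := by
        rw [lintegral_const_mul' _ _ ENNReal.ofReal_ne_top, eLpNorm_one_eq_lintegral_enorm,
          smul_eq_mul, mul_comm h]
    _ ≤ ENNReal.ofReal c * (eLpNorm h 2 μ * eLpNorm g 2 μ) := by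
        gcongr
        exact eLpNorm_smul_le_mul_eLpNorm hg.1 hh.1
    _ = ENNReal.ofReal c * eLpNorm g 2 μ * eLpNorm h 2 μ := by ring

theorem eLpNorm_le_mul_add_mul_of_enorm_le {E F G : Type*} [NormedAddCommGroup E]
    [NormedAddCommGroup F] [NormedAddCommGroup G] {p : ℝ≥0∞} (hp : 1 ≤ p)
    {u : α → E} {g : α → F} {h : α → G} (hg : AEStronglyMeasurable g μ)
    (hh : AEStronglyMeasurable h μ) {a b : ℝ≥0∞}
    (hu : ∀ x, ‖u x‖ₑ ≤ a * ‖g x‖ₑ + b * ‖h x‖ₑ) :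
    eLpNorm u p μ ≤ a * eLpNorm g p μ + b * eLpNorm h p μ :=
  calc eLpNorm u p μ ≤ eLpNorm (fun x => a * ‖g x‖ₑ + b * ‖h x‖ₑ) p μ :=
        eLpNorm_mono_enorm hu
    _ ≤ eLpNorm (fun x => a * ‖g x‖ₑ) p μ + eLpNorm (fun x => b * ‖h x‖ₑ) p μ :=
        eLpNorm_add_le (hg.enorm.const_mul a).aestronglyMeasurable
          (hh.enorm.const_mul b).aestronglyMeasurable hp
    _ ≤ a * eLpNorm g p μ + b * eLpNorm h p μ := by
        gcongr
        · exact eLpNorm_le_mul_eLpNorm_of_ae_le_mul'' p hg (Eventually.of_forall fun _ => le_rfl)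
        · exact eLpNorm_le_mul_eLpNorm_of_ae_le_mul'' p hh (Eventually.of_forall fun _ => le_rfl)

end LpEstimates

section AffineChange

variable {E : Type*} [NormedAddCommGroup E] [NormedSpace ℝ E] [MeasurableSpace E] [BorelSpace E]
  [FiniteDimensional ℝ E] (μ : Measure E) [μ.IsAddHaarMeasure] {a : ℝ}

theorem MeasureTheory.Measure.map_smul_add_addHaar (ha : a ≠ 0) (b : E) :
    μ.map (fun w => a • w + b) = ENNReal.ofReal |(a ^ Module.finrank ℝ E)⁻¹| • μ := by
  rw [show (fun w => a • w + b) = (· + b) ∘ (a • ·) from rfl,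
    ← Measure.map_map (measurable_add_const b) (measurable_const_smul a),
    Measure.map_addHaar_smul μ ha, Measure.map_smul, map_add_right_eq_self]

theorem MeasureTheory.Measure.quasiMeasurePreserving_smul_add (ha : a ≠ 0) (b : E) :
    Measure.QuasiMeasurePreserving (fun w => a • w + b) μ μ :=
  (measurePreserving_add_right μ b).quasiMeasurePreserving.comp
    (Measure.quasiMeasurePreserving_smul μ ha)

theorem eLpNorm_comp_smul_add {f : E → ℝ} (hf : AEStronglyMeasurable f μ) (ha : a ≠ 0) (b : E)
    {p : ℝ≥0∞} (hp : p ≠ ∞) :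
    eLpNorm (fun w => f (a • w + b)) p μ
      = ENNReal.ofReal |(a ^ Module.finrank ℝ E)⁻¹| ^ (1 / p).toReal * eLpNorm f p μ := by
  have hmap := Measure.map_smul_add_addHaar μ ha b
  rw [← smul_eq_mul, ← eLpNorm_smul_measure_of_ne_top hp, ← hmap]
  refine (eLpNorm_map_measure ?_ (Measure.quasiMeasurePreserving_smul_add μ ha b).aemeasurable).symm
  exact hf.mono_ac (hmap ▸ Measure.AbsolutelyContinuous.rfl.smul_left _)

theorem MeasureTheory.MemLp.comp_smul_add {f : E → ℝ} {p : ℝ≥0∞} (hf : MemLp f p μ) (hp : p ≠ ∞)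
    (ha : a ≠ 0) (b : E) : MemLp (fun w => f (a • w + b)) p μ := by
  refine ⟨hf.1.comp_quasiMeasurePreserving (Measure.quasiMeasurePreserving_smul_add μ ha b), ?_⟩
  rw [eLpNorm_comp_smul_add μ hf.1 ha b hp]
  exact ENNReal.mul_lt_top (by finiteness) hf.2

end AffineChange

section TruncatedCoagulation

variable {d M m n : ℕ} {R : ℝ} {g h : Euc d → ℝ} {f : ℕ → Euc d → ℝ}

theorem measurable_indR : Measurable (indR d R) :=
  measurable_const.indicator measurableSet_closedBall

theorem memLp_indR : MemLp (indR d R) 2 (volume : Measure (Euc d)) :=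
  memLp_indicator_const 2 measurableSet_closedBall 1 (Or.inr measure_closedBall_lt_top.ne)

theorem indR_mul_self (v : Euc d) : indR d R v * indR d R v = indR d R v := by
  by_cases hv : v ∈ Metric.closedBall (0 : Euc d) R <;> simp [indR, hv]

theorem abs_norm_sub_mul_indR_le (v w : Euc d) : |‖v - w‖ * indR d R w| ≤ ‖v‖ + |R| := by
  by_cases hw : w ∈ Metric.closedBall (0 : Euc d) R
  · rw [indR, Set.indicator_of_mem hw, mul_one, abs_norm]
    calc ‖v - w‖ ≤ ‖v‖ + ‖w‖ := norm_sub_le v w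
      _ ≤ ‖v‖ + |R| := by grw [mem_closedBall_zero_iff.mp hw, ← le_abs_self R]
  · rw [indR, Set.indicator_of_notMem hw, mul_zero, abs_zero]
    positivity

theorem abs_norm_sub_mul_indR_le_of_norm_le {v : Euc d} (hv : ‖v‖ ≤ R) (w : Euc d) :
    |‖v - w‖ * indR d R w| ≤ 2 * R := by
  have hR : 0 ≤ R := (norm_nonneg v).trans hv
  linarith [abs_norm_sub_mul_indR_le (R := R) v w, abs_of_nonneg hR]

theorem aestronglyMeasurable_norm_sub_mul_indR (v : Euc d) :
    AEStronglyMeasurable (fun w => ‖v - w‖ * indR d R w) volume :=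
  ((continuous_const.sub continuous_id).norm.measurable.mul measurable_indR).aestronglyMeasurable

theorem integrable_mul_mul_norm_sub_mul_indR (hg : MemLp g 2 volume) (hh : MemLp h 2 volume)
    (v : Euc d) :
    Integrable (fun w => g w * h w * ‖v - w‖ * indR d R w) volume :=
  (integrable_mul_mul_of_abs_le hg hh (aestronglyMeasurable_norm_sub_mul_indR v)
    (abs_norm_sub_mul_indR_le v)).congr (Eventually.of_forall fun _ => (mul_assoc _ _ _).symm)

theorem enorm_integral_mul_mul_norm_sub_mul_indR_le (hg : MemLp g 2 volume)
    (hh : MemLp h 2 volume) {v : Euc d} (hv : ‖v‖ ≤ R) :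
    ‖∫ w, g w * h w * ‖v - w‖ * indR d R w‖ₑ
      ≤ ENNReal.ofReal (2 * R) * eLpNorm g 2 volume * eLpNorm h 2 volume := by
  simpa only [mul_assoc] using
    enorm_integral_mul_mul_le hg hh (abs_norm_sub_mul_indR_le_of_norm_le hv)

theorem mul_norm_sub_mul_indR_eq (a : ℝ) (v w : Euc d) :
    a * ‖v - w‖ * indR d R w = a * indR d R w * ‖v - w‖ * indR d R w := by
  calc a * ‖v - w‖ * indR d R w = a * ‖v - w‖ * (indR d R w * indR d R w) := by
        rw [indR_mul_self]
    _ = a * indR d R w * ‖v - w‖ * indR d R w := by ring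

theorem integrable_mul_norm_sub_mul_indR (hh : MemLp h 2 volume) (v : Euc d) :
    Integrable (fun w => h w * ‖v - w‖ * indR d R w) volume := by
  simpa only [← mul_norm_sub_mul_indR_eq] using
    integrable_mul_mul_norm_sub_mul_indR (R := R) hh (memLp_indR (R := R)) v

theorem enorm_integral_mul_norm_sub_mul_indR_le (hh : MemLp h 2 volume)
    {v : Euc d} (hv : ‖v‖ ≤ R) :
    ‖∫ w, h w * ‖v - w‖ * indR d R w‖ₑ
      ≤ ENNReal.ofReal (2 * R) * eLpNorm h 2 volume * eLpNorm (indR d R) 2 volume := by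
  simpa only [← mul_norm_sub_mul_indR_eq] using
    enorm_integral_mul_mul_norm_sub_mul_indR_le hh (memLp_indR (R := R)) hv

theorem aestronglyMeasurable_integral_mul_norm_sub_mul_indR (hh : AEStronglyMeasurable h volume) :
    AEStronglyMeasurable (fun v => ∫ w, h w * ‖v - w‖ * indR d R w) volume :=
  AEStronglyMeasurable.integral_prod_right'
    (f := fun p : Euc d × Euc d => h p.2 * ‖p.1 - p.2‖ * indR d R p.2)
    (((hh.comp_quasiMeasurePreserving Measure.quasiMeasurePreserving_snd).mul
      (continuous_fst.sub continuous_snd).norm.aestronglyMeasurable).mul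
      (measurable_indR.comp measurable_snd).aestronglyMeasurable)

theorem cvar_eq_smul_add (v w : Euc d) :
    cvar d m n v w = (((n : ℝ) - m) / n) • w + ((m : ℝ) / n) • v := by
  unfold cvar
  module

def cvarScale (d m n : ℕ) : ℝ≥0∞ :=
  ENNReal.ofReal |((((n : ℝ) - m) / n) ^ Module.finrank ℝ (Euc d))⁻¹| ^ (1 / (2 : ℝ≥0∞)).toReal

theorem cvarScale_ne_top : cvarScale d m n ≠ ∞ := by
  unfold cvarScale
  finiteness

theorem cvar_coeff_ne_zero (hn : 0 < n) (hnm : n < m) : ((n : ℝ) - m) / n ≠ 0 := by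
  have : (n : ℝ) < m := by exact_mod_cast hnm
  have : (0 : ℝ) < n := by exact_mod_cast hn
  exact div_ne_zero (by linarith) (by linarith)

theorem MeasureTheory.MemLp.comp_cvar (hg : MemLp g 2 volume) (hn : 0 < n) (hnm : n < m)
    (v : Euc d) : MemLp (fun w => g (cvar d m n v w)) 2 volume := by
  simpa only [cvar_eq_smul_add] using
    hg.comp_smul_add volume ENNReal.ofNat_ne_top (cvar_coeff_ne_zero hn hnm) _

theorem eLpNorm_comp_cvar (hg : AEStronglyMeasurable g volume) (hn : 0 < n)
    (hnm : n < m) (v : Euc d) :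
    eLpNorm (fun w => g (cvar d m n v w)) 2 volume = cvarScale d m n * eLpNorm g 2 volume := by
  simpa only [cvar_eq_smul_add, cvarScale] using
    eLpNorm_comp_smul_add volume hg (cvar_coeff_ne_zero hn hnm) _ ENNReal.ofNat_ne_top

theorem quasiMeasurePreserving_cvar (hn : 0 < n) (hnm : n < m) :
    Measure.QuasiMeasurePreserving (fun p : Euc d × Euc d => cvar d m n p.1 p.2)
      (volume.prod volume) volume := by
  have hm : (m : ℝ) / n ≠ 0 := div_ne_zero (by exact_mod_cast (hn.trans hnm).ne')
    (by exact_mod_cast hn.ne')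
  refine QuasiMeasurePreserving.prod_of_left (by unfold cvar; fun_prop)
    (Eventually.of_forall fun w => ?_)
  simpa only [cvar_eq_smul_add, add_comm] using
    Measure.quasiMeasurePreserving_smul_add volume hm ((((n : ℝ) - m) / n) • w)

theorem aestronglyMeasurable_integral_comp_cvar_mul (hg : AEStronglyMeasurable g volume)
    (hh : AEStronglyMeasurable h volume) (hn : 0 < n) (hnm : n < m) :
    AEStronglyMeasurable
      (fun v => ∫ w, g (cvar d m n v w) * h w * ‖v - w‖ * indR d R w) volume :=
  AEStronglyMeasurable.integral_prod_right'
    (f := fun p : Euc d × Euc d => g (cvar d m n p.1 p.2) * h p.2 * ‖p.1 - p.2‖ * indR d R p.2)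
    ((((hg.comp_quasiMeasurePreserving (quasiMeasurePreserving_cvar hn hnm)).mul
      (hh.comp_quasiMeasurePreserving Measure.quasiMeasurePreserving_snd)).mul
      (continuous_fst.sub continuous_snd).norm.aestronglyMeasurable).mul
      (measurable_indR.comp measurable_snd).aestronglyMeasurable)

theorem enorm_integral_comp_cvar_mul_le (hg : MemLp g 2 volume) (hh : MemLp h 2 volume)
    (hn : 0 < n) (hnm : n < m) {v : Euc d} (hv : ‖v‖ ≤ R) :
    ‖∫ w, g (cvar d m n v w) * h w * ‖v - w‖ * indR d R w‖ₑ
      ≤ ENNReal.ofReal (2 * R) * cvarScale d m n * eLpNorm g 2 volume * eLpNorm h 2 volume := by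
  have := enorm_integral_mul_mul_norm_sub_mul_indR_le (hg.comp_cvar hn hnm v) hh hv
  rwa [eLpNorm_comp_cvar hg.1 hn hnm, ← mul_assoc] at this

theorem mem_Icc_of_mem_Ico_of_mem_Icc (hm : m ∈ Icc 1 M) (hn : n ∈ Ico 1 m) :
    n ∈ Icc 1 M ∧ m - n ∈ Icc 1 M := by
  simp only [mem_Icc, mem_Ico] at hm hn ⊢
  omega

theorem enorm_Qtrunc_gain_le (hf : ∀ k ∈ Icc 1 M, MemLp (f k) 2 volume) (hm : m ∈ Icc 1 M)
    {v : Euc d} (hv : ‖v‖ ≤ R) :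
    ‖∑ n ∈ Ico 1 m, ((m : ℝ) / n) ^ 2 *
        ∫ w, f n (cvar d m n v w) * f (m - n) w * ‖v - w‖ * indR d R w‖ₑ
      ≤ ENNReal.ofReal (2 * R) * (∑ n ∈ Ico 1 m, ‖((m : ℝ) / n) ^ 2‖ₑ * cvarScale d m n)
        * (∑ k ∈ Icc 1 M, eLpNorm (f k) 2 volume) ^ 2 := by
  set S := ∑ k ∈ Icc 1 M, eLpNorm (f k) 2 volume
  have hS : ∀ k ∈ Icc 1 M, eLpNorm (f k) 2 volume ≤ S := fun k hk =>
    single_le_sum (f := fun k => eLpNorm (f k) 2 volume) (fun _ _ => zero_le) hk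
  rw [mul_sum, sum_mul]
  refine (enorm_sum_le _ _).trans (sum_le_sum fun n hn => ?_)
  obtain ⟨hn₁, hnm⟩ := mem_Ico.mp hn
  obtain ⟨hnM, hmnM⟩ := mem_Icc_of_mem_Ico_of_mem_Icc hm hn
  calc ‖((m : ℝ) / n) ^ 2 * ∫ w, f n (cvar d m n v w) * f (m - n) w * ‖v - w‖ * indR d R w‖ₑ
      ≤ ‖((m : ℝ) / n) ^ 2‖ₑ * (ENNReal.ofReal (2 * R) * cvarScale d m n
          * eLpNorm (f n) 2 volume * eLpNorm (f (m - n)) 2 volume) := by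
        rw [enorm_mul]
        gcongr
        exact enorm_integral_comp_cvar_mul_le (hf n hnM) (hf (m - n) hmnM) hn₁ hnm hv
    _ ≤ ‖((m : ℝ) / n) ^ 2‖ₑ * (ENNReal.ofReal (2 * R) * cvarScale d m n * S * S) := by
        gcongr
        exacts [hS n hnM, hS (m - n) hmnM]
    _ = ENNReal.ofReal (2 * R) * (‖((m : ℝ) / n) ^ 2‖ₑ * cvarScale d m n) * S ^ 2 := by ring

theorem enorm_Qtrunc_loss_le (hf : ∀ k ∈ Icc 1 M, MemLp (f k) 2 volume) {v : Euc d} (hv : ‖v‖ ≤ R) :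
    ‖∑ n ∈ Icc 1 M, f m v * ∫ w, f n w * ‖v - w‖ * indR d R w‖ₑ
      ≤ ENNReal.ofReal (2 * R) * eLpNorm (indR d R) 2 volume
        * (∑ k ∈ Icc 1 M, eLpNorm (f k) 2 volume) * ‖f m v‖ₑ := by
  rw [mul_sum, sum_mul]
  refine (enorm_sum_le _ _).trans (sum_le_sum fun n hn => ?_)
  rw [enorm_mul, mul_comm]
  calc ‖∫ w, f n w * ‖v - w‖ * indR d R w‖ₑ * ‖f m v‖ₑ
      ≤ ENNReal.ofReal (2 * R) * eLpNorm (f n) 2 volume * eLpNorm (indR d R) 2 volume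
          * ‖f m v‖ₑ := by
        gcongr
        exact enorm_integral_mul_norm_sub_mul_indR_le (hf n hn) hv
    _ = _ := by ring

theorem enorm_Qtrunc_le (hf : ∀ k ∈ Icc 1 M, MemLp (f k) 2 volume) (hm : m ∈ Icc 1 M)
    (v : Euc d) :
    ‖Qtrunc d M R f m v‖ₑ
      ≤ ENNReal.ofReal (2 * R) * (∑ n ∈ Ico 1 m, ‖((m : ℝ) / n) ^ 2‖ₑ * cvarScale d m n)
          * (∑ k ∈ Icc 1 M, eLpNorm (f k) 2 volume) ^ 2 * ‖indR d R v‖ₑ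
        + 2 * (ENNReal.ofReal (2 * R) * eLpNorm (indR d R) 2 volume
          * (∑ k ∈ Icc 1 M, eLpNorm (f k) 2 volume)) * ‖f m v‖ₑ := by
  by_cases hv : v ∈ Metric.closedBall (0 : Euc d) R
  · have hv' : ‖v‖ ≤ R := mem_closedBall_zero_iff.mp hv
    rw [Qtrunc, indR, Set.indicator_of_mem hv, one_mul, enorm_one, mul_one, mul_assoc 2]
    refine enorm_sub_le.trans (add_le_add (enorm_Qtrunc_gain_le hf hm hv') ?_)
    rw [enorm_mul]
    exact mul_le_mul' (Real.enorm_natCast 2).le (enorm_Qtrunc_loss_le hf hv')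
  · simp [Qtrunc, indR, Set.indicator_of_notMem hv]

def coagBound (d : ℕ) (R : ℝ) (m : ℕ) : ℝ≥0∞ :=
  ENNReal.ofReal (2 * R) * (∑ n ∈ Ico 1 m, ‖((m : ℝ) / n) ^ 2‖ₑ * cvarScale d m n + 2)
    * eLpNorm (indR d R) 2 volume

theorem coagBound_ne_top : coagBound d R m ≠ ∞ :=
  ENNReal.mul_ne_top (ENNReal.mul_ne_top ENNReal.ofReal_ne_top (ENNReal.add_ne_top.mpr
    ⟨ENNReal.sum_ne_top.mpr fun _ _ => ENNReal.mul_ne_top enorm_ne_top cvarScale_ne_top,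
      ENNReal.ofNat_ne_top⟩)) memLp_indR.2.ne

theorem eLpNorm_Qtrunc_le (hf : ∀ k ∈ Icc 1 M, MemLp (f k) 2 volume) (hm : m ∈ Icc 1 M) :
    eLpNorm (Qtrunc d M R f m) 2 volume
      ≤ coagBound d R m * (∑ k ∈ Icc 1 M, eLpNorm (f k) 2 volume) ^ 2 := by
  set S := ∑ k ∈ Icc 1 M, eLpNorm (f k) 2 volume
  have hS : eLpNorm (f m) 2 volume ≤ S :=
    single_le_sum (f := fun k => eLpNorm (f k) 2 volume) (fun _ _ => zero_le) hm
  calc eLpNorm (Qtrunc d M R f m) 2 volume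
      ≤ _ := eLpNorm_le_mul_add_mul_of_enorm_le one_le_two measurable_indR.aestronglyMeasurable
        (hf m hm).1 (enorm_Qtrunc_le hf hm)
    _ ≤ _ := by grw [hS]
    _ = coagBound d R m * S ^ 2 := by unfold coagBound; ring

theorem aestronglyMeasurable_Qtrunc (hf : ∀ k ∈ Icc 1 M, AEStronglyMeasurable (f k) volume)
    (hm : m ∈ Icc 1 M) : AEStronglyMeasurable (Qtrunc d M R f m) volume := by
  refine measurable_indR.aestronglyMeasurable.mul (.sub
    (Finset.aestronglyMeasurable_fun_sum _ fun n hn => ?_)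
    ((Finset.aestronglyMeasurable_fun_sum _ fun n hn => ?_).const_mul 2))
  · obtain ⟨hnM, hmnM⟩ := mem_Icc_of_mem_Ico_of_mem_Icc hm hn
    obtain ⟨hn₁, hnm⟩ := mem_Ico.mp hn
    exact (aestronglyMeasurable_integral_comp_cvar_mul (hf n hnM) (hf (m - n) hmnM) hn₁
      hnm).const_mul _
  · exact (hf m hm).mul (aestronglyMeasurable_integral_mul_norm_sub_mul_indR (hf n hn))

theorem memLp_Qtrunc (hf : ∀ k ∈ Icc 1 M, MemLp (f k) 2 volume) (hm : m ∈ Icc 1 M) :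
    MemLp (Qtrunc d M R f m) 2 volume :=
  ⟨aestronglyMeasurable_Qtrunc (fun k hk => (hf k hk).1) hm,
    (eLpNorm_Qtrunc_le hf hm).trans_lt (ENNReal.mul_lt_top coagBound_ne_top.lt_top
      (ENNReal.pow_lt_top (ENNReal.sum_lt_top.mpr fun k hk => (hf k hk).2)))⟩

end TruncatedCoagulation

theorem statement9_general (d M : ℕ) (R : ℝ) :
    ∃ C : ℝ≥0, ∀ f : ℕ → Euc d → ℝ,
      (∀ m ∈ Finset.Icc 1 M, MemLp (f m) 2 (volume : Measure (Euc d))) →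
      (∀ m ∈ Finset.Icc 1 M, (∀ᵐ v ∂(volume : Measure (Euc d)),
          (∀ n ∈ Finset.Ico 1 m,
            Integrable (fun w => f n (cvar d m n v w) * f (m - n) w * ‖v - w‖ * indR d R w)) ∧
          ∀ n ∈ Finset.Icc 1 M,
            Integrable (fun w => f n w * ‖v - w‖ * indR d R w)) ∧
        MemLp (Qtrunc d M R f m) 2 (volume : Measure (Euc d))) ∧
      (∑ m ∈ Finset.Icc 1 M, eLpNorm (Qtrunc d M R f m) 2 volume) ≤
        (C : ℝ≥0∞) * (∑ m ∈ Finset.Icc 1 M, eLpNorm (f m) 2 volume) ^ 2 := by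
  have hC : ∑ m ∈ Icc 1 M, coagBound d R m ≠ ∞ :=
    (ENNReal.sum_lt_top.mpr fun _ _ => coagBound_ne_top.lt_top).ne
  refine ⟨(∑ m ∈ Icc 1 M, coagBound d R m).toNNReal, fun f hf => ⟨fun m hm => ⟨?_, ?_⟩, ?_⟩⟩
  · refine Eventually.of_forall fun v => ⟨fun n hn => ?_, fun n hn => ?_⟩
    · obtain ⟨hnM, hmnM⟩ := mem_Icc_of_mem_Ico_of_mem_Icc hm hn
      obtain ⟨hn₁, hnm⟩ := mem_Ico.mp hn
      exact integrable_mul_mul_norm_sub_mul_indR ((hf n hnM).comp_cvar hn₁ hnm v) (hf _ hmnM) v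
    · exact integrable_mul_norm_sub_mul_indR (hf n hn) v
  · exact memLp_Qtrunc hf hm
  · rw [ENNReal.coe_toNNReal hC, sum_mul]
    exact sum_le_sum fun m hm => eLpNorm_Qtrunc_le hf hm

/-- for L² families the truncated coagulation operator is well defined
(the defining integrals converge absolutely a.e.), maps into L², and satisfies a
quadratic bound ∑_m ‖Q_m^R(f,f)‖_{L²} ≤ C_R (∑_m ‖f_m‖_{L²})². -/
theorem statement9 (d M : ℕ) (hd : 1 ≤ d) (hM : 1 ≤ M) (R : ℝ) (hR : 0 < R) :
    ∃ C : ℝ≥0, ∀ f : ℕ → Euc d → ℝ,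
      (∀ m ∈ Finset.Icc 1 M, MemLp (f m) 2 (volume : Measure (Euc d))) →
      (∀ m ∈ Finset.Icc 1 M, (∀ᵐ v ∂(volume : Measure (Euc d)),
          (∀ n ∈ Finset.Ico 1 m,
            Integrable (fun w => f n (cvar d m n v w) * f (m - n) w * ‖v - w‖ * indR d R w)) ∧
          ∀ n ∈ Finset.Icc 1 M,
            Integrable (fun w => f n w * ‖v - w‖ * indR d R w)) ∧
        MemLp (Qtrunc d M R f m) 2 (volume : Measure (Euc d))) ∧
      (∑ m ∈ Finset.Icc 1 M, eLpNorm (Qtrunc d M R f m) 2 volume) ≤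
        (C : ℝ≥0∞) * (∑ m ∈ Finset.Icc 1 M, eLpNorm (f m) 2 volume) ^ 2 :=
  statement9_general d M R
end
end
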